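/- arXiv:1702.06266 — 9 statements merged into one kernel-verified Lean document; each statement's English description precedes it below -/
import Mathlib

section
/- Let S be a union-closed set system on a set Ω with infinite breadth. Then there exists a spread ℰ in Ω such that S ⊓ join(ℰ) contains T_max(ℰ), or there exists a spread ℰ in Ω such that S ⊓ join(ℰ) contains T_min(ℰ), or there exists a spread ℰ in Ω such that S ⊓ join(ℰ) contains T_ort(ℰ). -/
open Set Filter
open scoped Classical

variable {Ω : Type*}

/-- A union-closed set system (concrete semilattice) on `Ω`. -/
def UnionClosed (S : Set (Set Ω)) : Prop := ∀ x ∈ S, ∀ y ∈ S, x ∪ y ∈ S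

/-- A finite collection of subsets of `Ω` is incompressible if no proper
subcollection has the same union. -/
def Incompressible (F : Finset (Set Ω)) : Prop :=
  ∀ F' ⊂ F, ⋃₀ (↑F' : Set (Set Ω)) ≠ ⋃₀ (↑F : Set (Set Ω))

/-- `S` has infinite breadth: incompressible subcollections of every size. -/
def InfiniteBreadth (S : Set (Set Ω)) : Prop :=
  ∀ n : ℕ, ∃ F : Finset (Set Ω), ↑F ⊆ S ∧ F.card = n ∧ Incompressible F

/-- `S` has finite breadth. -/
def FiniteBreadth (S : Set (Set Ω)) : Prop :=
  ∃ N : ℕ, ∀ F : Finset (Set Ω), ↑F ⊆ S → Incompressible F → F.card ≤ N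

/-- `S` has breadth at most `m`. -/
def BreadthLE (S : Set (Set Ω)) (m : ℕ) : Prop :=
  ∀ F : Finset (Set Ω), ↑F ⊆ S → Incompressible F → F.card ≤ m

/-- `S ⊓ a = { x ∩ a : x ∈ S }`. -/
def proj (S : Set (Set Ω)) (a : Set Ω) : Set (Set Ω) := (fun x => x ∩ a) '' S

/-- `S ⊖ a = { x \ a : x ∈ S }`. -/
def ominus (S : Set (Set Ω)) (a : Set Ω) : Set (Set Ω) := (fun x => x \ a) '' S

/-- `S^{−Γ} = { x ∈ S : x ∩ Γ = ∅ }`. -/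
def avoid (S : Set (Set Ω)) (Γ : Set Ω) : Set (Set Ω) := {x ∈ S | x ∩ Γ = ∅}

/-- A spread: pairwise disjoint nonempty finite sets with sizes tending to infinity. -/
def IsSpread (E : ℕ → Set Ω) : Prop :=
  (∀ n, (E n).Finite) ∧ (∀ n, (E n).Nonempty) ∧
  (∀ m n, m ≠ n → Disjoint (E m) (E n)) ∧
  Tendsto (fun n => (E n).ncard) atTop atTop

/-- The join of a spread. -/
def sjoin (E : ℕ → Set Ω) : Set Ω := ⋃ n, E n

/-- The set system `T_max(ℰ)`. -/
def Tmax (E : ℕ → Set Ω) : Set (Set Ω) :=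
  {x | ∃ n, ∃ a : Set Ω, a ⊆ E n ∧ a.Nonempty ∧ x = (⋃ k < n, E k) ∪ a}

/-- The set system `T_min(ℰ)`. -/
def Tmin (E : ℕ → Set Ω) : Set (Set Ω) :=
  {x | ∃ n, ∃ a : Set Ω, a ⊆ E n ∧ a.Nonempty ∧ x = a ∪ ⋃ k > n, E k}

/-- The set system `T_ort(ℰ)`. -/
def Tort (E : ℕ → Set Ω) : Set (Set Ω) :=
  {x | ∃ n, ∃ a : Set Ω, a ⊆ E n ∧ a.Nonempty ∧
        x = (⋃ k < n, E k) ∪ a ∪ ⋃ k > n, E k}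

/-- A refinement of a spread. -/
def Refines (F E : ℕ → Set Ω) : Prop :=
  IsSpread F ∧ ∃ g : ℕ → ℕ, Function.Injective g ∧ ∀ j, F j ⊆ E (g j)

/-- The sequence `a` shatters the spread `E`. -/
def Shatters (a : ℕ → Set Ω) (E : ℕ → Set Ω) : Prop :=
  ∀ (m : ℕ) (y : ℕ → Set Ω), (∀ j < m, y j = a j ∨ y j = (a j)ᶜ) →
    Tendsto (fun n => (E n ∩ ⋂ j < m, y j).ncard) atTop atTop

/-- A finite partition of `Ω`. -/
def IsPartitionC (C : Finset (Set Ω)) : Prop :=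
  (∀ c ∈ C, ∀ d ∈ C, c ≠ d → Disjoint c d) ∧ ⋃₀ (↑C : Set (Set Ω)) = univ

/-- `C` colours the spread `E`. -/
def Colours (C : Finset (Set Ω)) (E : ℕ → Set Ω) : Prop :=
  ∀ c ∈ C, Tendsto (fun n => (c ∩ E n).ncard) atTop atTop

/-- The colouring `C` of the spread `E` is `S`-decisive. -/
def Decisive (S : Set (Set Ω)) (C : Finset (Set Ω)) (E : ℕ → Set Ω) : Prop :=
  ∃ c₀ ∈ C, ∀ x ∈ S, ∃ B : ℕ, ∀ n,
    (x ∩ c₀ ∩ E n).ncard ≤ B ∨ ∃ c ∈ C, (xᶜ ∩ c ∩ E n).ncard ≤ B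

/-- `F` halves `D` with respect to `(E n)_{n ∈ N}`. -/
def Halves (F D : Set Ω) (E : ℕ → Set Ω) (N : Set ℕ) : Prop :=
  Tendsto (fun n => (D ∩ F ∩ E n).ncard) (atTop ⊓ 𝓟 N) atTop ∧
  Tendsto (fun n => ((D \ F) ∩ E n).ncard) (atTop ⊓ 𝓟 N) atTop

/-- `Ew` is a witness of incompressibility for the collection `F`. -/
def IsWitness (F : Finset (Set Ω)) (Ew : Set Ω) : Prop :=
  ∃ w : Set Ω → Ω, (∀ x ∈ F, w x ∈ x ∧ ∀ y ∈ F, y ≠ x → w x ∉ y) ∧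
    Ew = w '' (↑F : Set (Set Ω))

/-- Condition (A). -/
def CondA (S : Set (Set Ω)) : Prop :=
  ∀ k : ℕ, ∀ p ∈ insert (∅ : Set Ω) S, InfiniteBreadth (proj S pᶜ) →
    ∃ F : Finset (Set Ω), ↑F ⊆ ominus S p ∧ F.card = k ∧ Incompressible F ∧
      InfiniteBreadth (proj (ominus S p) (⋃₀ (↑F : Set (Set Ω)))ᶜ)

/-- Condition (B). -/
def CondB (S : Set (Set Ω)) : Prop :=
  ∀ k : ℕ, ∀ c Γ : Set Ω, InfiniteBreadth (proj (avoid S Γ) c) →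
    ∃ F : Finset (Set Ω), ↑F ⊆ proj (avoid S Γ) c ∧ F.card = k ∧ Incompressible F ∧
      ∃ Ew : Set Ω, IsWitness F Ew ∧ InfiniteBreadth (proj (avoid S (Γ ∪ Ew)) c)

/-- Incompressibility in an abstract (sup-)semilattice: the product (sup) over any proper
nonempty subset differs from the product over the whole set. -/
def AIncomp {S : Type*} [SemilatticeSup S] (E : Finset S) : Prop :=
  ∀ E' ⊂ E, ∀ (h' : E'.Nonempty) (h : E.Nonempty), E'.sup' h' id ≠ E.sup' h id

/-- Incompressibility in an abstract meet-semilattice. -/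
def AIncompInf {S : Type*} [SemilatticeInf S] (E : Finset S) : Prop :=
  ∀ E' ⊂ E, ∀ (h' : E'.Nonempty) (h : E.Nonempty), E'.inf' h' id ≠ E.inf' h id

/-- The standard spread on ℕ × ℕ: `E0 n = {(n,k) : k ≤ n}` (0-based, |E0 n| = n+1). -/
def E0 : ℕ → Set (ℕ × ℕ) := fun n => {p | p.1 = n ∧ p.2 ≤ n}

/-!
An incompressible family of size `k` in `S` amounts to `k` points, each lying in one member of the
family and in no other. Using the pigeonhole principle we take such families of growing size, each
compatible with the earlier ones: its points lie all inside or all outside each earlier member,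
and its members all have the same trace on the earlier points. Along a nonprincipal ultrafilter
every point of a level gets a limiting type: whether it lies in the members of later levels
(`down`), and whether its own member contains later levels (`up`). Keeping a quarter of each level
with constant type, and a subsequence of levels on which the type is constant, the union of the
members of the points of a nonempty subset `a` of a level traces on the join as `a`, together
with all lower levels if `down` and all higher levels if `up`. This gives `T_ort`, `T_min` or
`T_max`; when neither holds every singleton is a trace, and `T_max` is obtained by unions.
-/

theorem UnionClosed.biUnion_mem {β : Type*} {T : Set (Set Ω)} (hT : UnionClosed T) {a : Set β}
    (ha : a.Finite) (hne : a.Nonempty) {g : β → Set Ω} (hg : ∀ p ∈ a, g p ∈ T) :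
    ⋃ p ∈ a, g p ∈ T := by
  have hsup : SupClosed T := fun x hx y hy => hT x hx y hy
  have := hsup.finsetSup'_mem (ha.toFinset_nonempty.2 hne) (f := g) (by simpa using hg)
  simpa [Finset.sup'_eq_sup, Finset.sup_set_eq_biUnion] using this

theorem UnionClosed.proj {S : Set (Set Ω)} (hS : UnionClosed S) (J : Set Ω) :
    UnionClosed (proj S J) := by
  rintro _ ⟨x, hx, rfl⟩ _ ⟨y, hy, rfl⟩
  exact ⟨x ∪ y, hS x hx y hy, Set.union_inter_distrib_right x y J⟩

theorem Incompressible.exists_mem_notMem {F : Finset (Set Ω)} (hF : Incompressible F) {x : Set Ω}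
    (hx : x ∈ F) : ∃ w ∈ x, ∀ y ∈ F, y ≠ x → w ∉ y := by
  by_contra! h
  refine hF (F.erase x) (Finset.erase_ssubset hx) (Set.Subset.antisymm
    (Set.sUnion_subset_sUnion (by simp)) ?_)
  rintro z ⟨y, hy, hzy⟩
  by_cases hyx : y = x
  · obtain ⟨y', hy', hy'x, hzy'⟩ := h z (hyx ▸ hzy)
    exact ⟨y', by simp [hy'x, hy'], hzy'⟩
  · exact ⟨y, by simp [hyx, hy], hzy⟩

theorem Finset.exists_subset_le_card_forall_eq {α β : Type*} [Fintype β] [Nonempty β]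
    (s : Finset α) (κ : α → β) {k : ℕ} (hk : Fintype.card β * k ≤ s.card) :
    ∃ t ⊆ s, k ≤ t.card ∧ ∃ b, ∀ p ∈ t, κ p = b := by
  obtain ⟨b, -, hb⟩ := Finset.exists_le_card_fiber_of_mul_le_card_of_maps_to
    (f := κ) (t := Finset.univ) (fun _ _ => Finset.mem_univ _) Finset.univ_nonempty hk
  exact ⟨_, Finset.filter_subset _ _, hb, b, fun p hp => (Finset.mem_filter.1 hp).2⟩

theorem Filter.exists_seq_forall_of_eventually {α : Type*} {l : Filter α} [l.NeBot]
    {P : α → Prop} {r : α → α → Prop} (hP : ∀ᶠ x in l, P x) (hr : ∀ x, ∀ᶠ y in l, r x y) :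
    ∃ N : ℕ → α, (∀ n, P (N n)) ∧ ∀ m n, m < n → r (N m) (N n) :=
  exists_seq_of_forall_finset_exists P r fun s _ =>
    (hP.and ((Filter.eventually_all_finset s).2 fun x _ => hr x)).exists

theorem Ultrafilter.exists_eventually_forall_iff {α β : Type*} (U : Ultrafilter α)
    {A : α → Set β} {Q : α → β → Prop}
    (h : ∀ᶠ n in U, ∀ q ∈ A n, ∀ q' ∈ A n, Q n q ↔ Q n q') :
    ∃ P : Prop, ∀ᶠ n in U, ∀ q ∈ A n, Q n q ↔ P := by
  by_cases hall : ∀ᶠ n in U, ∀ q ∈ A n, Q n q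
  · exact ⟨True, hall.mono fun n hn q hq => iff_true_intro (hn q hq)⟩
  · refine ⟨False, ((Ultrafilter.eventually_not.2 hall).and h).mono ?_⟩
    rintro n ⟨hn, hconst⟩ q hq
    push Not at hn
    obtain ⟨q₀, hq₀, hnq₀⟩ := hn
    exact iff_false_intro fun hQ => hnq₀ ((hconst q hq q₀ hq₀).1 hQ)

/-- An incompressible subfamily `{R p : p ∈ pts}` of `S` in which `p` is a point of `R p` lying in
no other member. -/
structure WitnessedFamily (S : Set (Set Ω)) where
  pts : Finset Ω
  R : Ω → Set Ω
  mem : ∀ p ∈ pts, R p ∈ S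
  mem_R_iff : ∀ p ∈ pts, ∀ q ∈ pts, q ∈ R p ↔ q = p

namespace WitnessedFamily

variable {S : Set (Set Ω)}

def restrict (L : WitnessedFamily S) (t : Finset Ω) (ht : t ⊆ L.pts) : WitnessedFamily S where
  pts := t
  R := L.R
  mem p hp := L.mem p (ht hp)
  mem_R_iff p hp q hq := L.mem_R_iff p (ht hp) q (ht hq)

theorem exists_card_eq (hb : InfiniteBreadth S) (k : ℕ) :
    ∃ L : WitnessedFamily S, L.pts.card = k := by
  have : Nonempty Ω := by
    obtain ⟨F, -, hF1, hF⟩ := hb 1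
    obtain ⟨x, hx⟩ := Finset.card_eq_one.1 hF1
    obtain ⟨w, -⟩ := hF.exists_mem_notMem (hx ▸ Finset.mem_singleton_self x)
    exact ⟨w⟩
  obtain ⟨F, hFS, hFk, hF⟩ := hb k
  choose! w hw hw' using fun x (hx : x ∈ F) => hF.exists_mem_notMem hx
  have hw_mem_iff : ∀ x ∈ F, ∀ y ∈ F, w y ∈ x ↔ y = x := fun x hx y hy =>
    ⟨fun h => by_contra fun hyx => hw' y hy x hx (Ne.symm hyx) h, fun h => h ▸ hw y hy⟩
  have hinj : Set.InjOn w F := fun x hx y hy h =>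
    ((hw_mem_iff x hx y hy).1 (by rw [← h]; exact hw x hx)).symm
  have hR : ∀ x ∈ F, ⋃ y ∈ F, ⋃ (_ : w x ∈ y), y = x := by
    intro x hx
    ext z
    simp only [Set.mem_iUnion, exists_prop]
    exact ⟨fun ⟨y, hy, hxy, hz⟩ => (hw_mem_iff y hy x hx).1 hxy ▸ hz,
      fun hz => ⟨x, hx, hw x hx, hz⟩⟩
  refine ⟨⟨F.image w, fun p => ⋃ y ∈ F, ⋃ (_ : p ∈ y), y, ?_, ?_⟩, ?_⟩
  · simp only [Finset.mem_image, forall_exists_index, and_imp]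
    rintro _ x hx rfl
    exact (hR x hx).symm ▸ hFS hx
  · simp only [Finset.mem_image, forall_exists_index, and_imp]
    rintro _ x hx rfl _ y hy rfl
    rw [hR x hx, hw_mem_iff x hx y hy, hinj.eq_iff hy hx]
  · rw [Finset.card_image_of_injOn hinj, hFk]

structure Compatible (d e : WitnessedFamily S) : Prop where
  disjoint : Disjoint d.pts e.pts
  above : ∀ p ∈ d.pts, ∀ q ∈ e.pts, ∀ q' ∈ e.pts, q ∈ d.R p ↔ q' ∈ d.R p
  below : ∀ z ∈ d.pts, ∀ q ∈ e.pts, ∀ q' ∈ e.pts, z ∈ e.R q ↔ z ∈ e.R q'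

theorem exists_compatible (hb : InfiniteBreadth S) (s : Finset (WitnessedFamily S)) (k : ℕ) :
    ∃ e : WitnessedFamily S, k ≤ e.pts.card ∧ ∀ d ∈ s, Compatible d e := by
  set P := s.biUnion pts
  let I := s ×ˢ P
  obtain ⟨L, hL⟩ := exists_card_eq hb (P.card + Fintype.card (I → Prop × Prop) * k)
  let colour : Ω → I → Prop × Prop := fun q x => (q ∈ x.1.1.R x.1.2, x.1.2 ∈ L.R q)
  obtain ⟨t, hts, hkt, c, hc⟩ := (L.pts \ P).exists_subset_le_card_forall_eq colour (k := k)
    (by have := Finset.le_card_sdiff P L.pts; omega)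
  have htL : t ⊆ L.pts := hts.trans Finset.sdiff_subset
  refine ⟨L.restrict t htL, hkt, fun d hd => ⟨?_, ?_, ?_⟩⟩
  · exact Finset.disjoint_of_subset_right hts
      (Finset.disjoint_sdiff.mono_left (Finset.subset_biUnion_of_mem pts hd))
  all_goals
    intro p hp q hq q' hq'
    have hpI : (d, p) ∈ I := Finset.mem_product.2 ⟨hd, Finset.mem_biUnion.2 ⟨d, hd, hp⟩⟩
    have := congrFun ((hc q hq).trans (hc q' hq').symm) ⟨(d, p), hpI⟩
  · exact (congrArg Prod.fst this).to_iff
  · exact (congrArg Prod.snd this).to_iff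

theorem exists_seq_compatible (hb : InfiniteBreadth S) :
    ∃ f : ℕ → WitnessedFamily S, (∀ n, 4 * (n + 1) ≤ (f n).pts.card) ∧
      ∀ m n, m < n → Compatible (f m) (f n) := by
  obtain ⟨f, hf4, hf⟩ := exists_seq_of_forall_finset_exists (fun e => 4 ≤ e.pts.card)
    (fun d e => Compatible d e ∧ d.pts.card + 4 ≤ e.pts.card) fun s _ => by
      obtain ⟨e, he, hcomp⟩ := exists_compatible hb s (s.sup (·.pts.card) + 4)
      refine ⟨e, le_of_add_le_right he, fun d hd => ⟨hcomp d hd, ?_⟩⟩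
      have := Finset.le_sup (f := (·.pts.card)) hd
      omega
  refine ⟨f, fun n => ?_, fun m n hmn => (hf m n hmn).1⟩
  induction n with
  | zero => exact hf4 0
  | succ n ih => have := (hf n (n + 1) n.lt_succ_self).2; omega

end WitnessedFamily

structure IsRegularSeq {S : Set (Set Ω)} (L : ℕ → WitnessedFamily S) (down up : Prop) : Prop where
  isSpread : IsSpread fun n => ((L n).pts : Set Ω)
  mem_iff_of_lt : ∀ i n, i < n → ∀ q ∈ (L n).pts, ∀ p ∈ (L i).pts, p ∈ (L n).R q ↔ down
  mem_iff_of_gt : ∀ n i, n < i → ∀ p ∈ (L n).pts, ∀ q ∈ (L i).pts, q ∈ (L n).R p ↔ up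

theorem isSpread_of_card_le {E : ℕ → Finset Ω} (hdisj : ∀ m n, m < n → Disjoint (E m) (E n))
    (hcard : ∀ n, n + 1 ≤ (E n).card) : IsSpread fun n => (E n : Set Ω) := by
  refine ⟨fun n => (E n).finite_toSet, fun n => ?_, fun m n hmn => ?_, ?_⟩
  · exact Finset.coe_nonempty.2 (Finset.card_pos.1 ((Nat.succ_pos n).trans_le (hcard n)))
  · rcases hmn.lt_or_gt with h | h
    · exact Finset.disjoint_coe.2 (hdisj m n h)
    · exact Finset.disjoint_coe.2 (hdisj n m h).symm
  · simp only [Set.ncard_coe_finset]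
    exact tendsto_atTop_mono hcard (tendsto_add_atTop_nat 1)

theorem exists_large_subset_eventually_homogeneous {S : Set (Set Ω)} {f : ℕ → WitnessedFamily S}
    (U : Ultrafilter ℕ) (hU : ∀ m, ∀ᶠ n in (U : Filter ℕ), m < n)
    (hf : ∀ m n, m < n → (f m).Compatible (f n)) (m k : ℕ) (hk : 4 * k ≤ (f m).pts.card) :
    ∃ F ⊆ (f m).pts, k ≤ F.card ∧ ∃ down up : Prop, ∀ᶠ n in (U : Filter ℕ),
      ∀ p ∈ F, ∀ q ∈ (f n).pts, (p ∈ (f n).R q ↔ down) ∧ (q ∈ (f m).R p ↔ up) := by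
  have hdown : ∀ p ∈ (f m).pts, ∃ P : Prop,
      ∀ᶠ n in (U : Filter ℕ), ∀ q ∈ (f n).pts, p ∈ (f n).R q ↔ P := fun p hp =>
    U.exists_eventually_forall_iff ((hU m).mono fun n hn => (hf m n hn).below p hp)
  have hup : ∀ p ∈ (f m).pts, ∃ P : Prop,
      ∀ᶠ n in (U : Filter ℕ), ∀ q ∈ (f n).pts, q ∈ (f m).R p ↔ P := fun p hp =>
    U.exists_eventually_forall_iff ((hU m).mono fun n hn => (hf m n hn).above p hp)
  choose! D hD using hdown
  choose! A hA using hup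
  obtain ⟨F, hF, hkF, ⟨down, up⟩, hc⟩ :=
    (f m).pts.exists_subset_le_card_forall_eq (fun p => (D p, A p)) (k := k)
      (by simpa [Fintype.card_prod, Fintype.card_prop] using hk)
  refine ⟨F, hF, hkF, down, up, (Filter.eventually_all_finset F).2 fun p hp => ?_⟩
  obtain ⟨rfl, rfl⟩ := Prod.mk.inj (hc p hp)
  filter_upwards [hD p (hF hp), hA p (hF hp)] with n hDn hAn q hq
  exact ⟨hDn q hq, hAn q hq⟩

theorem exists_isRegularSeq {S : Set (Set Ω)} (hb : InfiniteBreadth S) :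
    ∃ (L : ℕ → WitnessedFamily S) (down up : Prop), IsRegularSeq L down up := by
  obtain ⟨f, hcard, hf⟩ := WitnessedFamily.exists_seq_compatible hb
  let U := Filter.hyperfilter ℕ
  have hU : ∀ m, ∀ᶠ n in (U : Filter ℕ), m < n := fun m =>
    Nat.hyperfilter_le_atTop (eventually_gt_atTop m)
  choose F hF hFcard down up hev using
    fun m => exists_large_subset_eventually_homogeneous U hU hf m (m + 1) (hcard m)
  obtain ⟨c, hc⟩ := (U.map fun m => (down m, up m)).eq_pure_of_finite
  have hpattern : ∀ᶠ m in (U : Filter ℕ), (down m, up m) = c := by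
    have : ∀ᶠ x in ((U.map fun m => (down m, up m) : Ultrafilter _) : Filter _), x = c := by
      rw [hc]
      exact Filter.eventually_pure.2 rfl
    rwa [Ultrafilter.coe_map, Filter.eventually_map] at this
  obtain ⟨N, hNc, hN⟩ :=
    Filter.exists_seq_forall_of_eventually hpattern fun m => (hU m).and (hev m)
  have hNmono : StrictMono N := fun i j hij => (hN i j hij).1
  refine ⟨fun j => (f (N j)).restrict (F (N j)) (hF (N j)), c.1, c.2, ⟨?_, ?_, ?_⟩⟩
  · exact isSpread_of_card_le (fun i j hij => (hf _ _ (hNmono hij)).disjoint.mono (hF _) (hF _))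
      fun j => (Nat.succ_le_succ (hNmono.id_le j)).trans (hFcard (N j))
  · intro i j hij q hq p hp
    rw [← hNc i]
    exact ((hN i j hij).2 p hp q (hF _ hq)).1
  · intro j i hji p hp q hq
    rw [← hNc j]
    exact ((hN j i hji).2 p hp q (hF _ hq)).2

namespace IsRegularSeq

variable {S : Set (Set Ω)} {L : ℕ → WitnessedFamily S} {down up : Prop}

theorem biUnion_inter_sjoin (h : IsRegularSeq L down up) {n : ℕ} {a : Set Ω}
    (ha : a ⊆ (L n).pts) (hne : a.Nonempty) :
    (⋃ p ∈ a, (L n).R p) ∩ sjoin (fun i => ((L i).pts : Set Ω)) =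
      ((if down then ⋃ k < n, ((L k).pts : Set Ω) else ∅) ∪ a) ∪
        (if up then ⋃ k > n, ((L k).pts : Set Ω) else ∅) := by
  ext z
  simp only [sjoin, Set.mem_inter_iff, Set.mem_iUnion, Set.mem_union, Set.mem_ite_empty_right,
    exists_prop, Finset.mem_coe]
  constructor
  · rintro ⟨⟨p, hp, hzp⟩, i, hzi⟩
    rcases lt_trichotomy i n with hi | rfl | hi
    · exact Or.inl (Or.inl ⟨(h.mem_iff_of_lt i n hi p (ha hp) z hzi).1 hzp, i, hi, hzi⟩)
    · exact Or.inl (Or.inr (((L i).mem_R_iff p (ha hp) z hzi).1 hzp ▸ hp))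
    · exact Or.inr ⟨(h.mem_iff_of_gt n i hi p (ha hp) z hzi).1 hzp, i, hi, hzi⟩
  · obtain ⟨p, hp⟩ := hne
    rintro ((⟨hdown, k, hk, hzk⟩ | hza) | ⟨hup, k, hk, hzk⟩)
    · exact ⟨⟨p, hp, (h.mem_iff_of_lt k n hk p (ha hp) z hzk).2 hdown⟩, k, hzk⟩
    · exact ⟨⟨z, hza, ((L n).mem_R_iff z (ha hza) z (ha hza)).2 rfl⟩, n, ha hza⟩
    · exact ⟨⟨p, hp, (h.mem_iff_of_gt n k hk p (ha hp) z hzk).2 hup⟩, k, hzk⟩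

theorem trace_mem_proj (h : IsRegularSeq L down up) (hS : UnionClosed S) {n : ℕ} {a : Set Ω}
    (ha : a ⊆ (L n).pts) (hne : a.Nonempty) :
    ((if down then ⋃ k < n, ((L k).pts : Set Ω) else ∅) ∪ a) ∪
        (if up then ⋃ k > n, ((L k).pts : Set Ω) else ∅) ∈
      proj S (sjoin fun i => ((L i).pts : Set Ω)) :=
  ⟨_, hS.biUnion_mem ((L n).pts.finite_toSet.subset ha) hne fun p hp => (L n).mem p (ha hp),
    h.biUnion_inter_sjoin ha hne⟩

theorem tort_subset (h : IsRegularSeq L down up) (hS : UnionClosed S) (hdown : down) (hup : up) :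
    Tort (fun n => ((L n).pts : Set Ω)) ⊆ proj S (sjoin fun n => ((L n).pts : Set Ω)) := by
  rintro _ ⟨n, a, ha, hne, rfl⟩
  simpa [hdown, hup] using h.trace_mem_proj hS ha hne

theorem tmin_subset (h : IsRegularSeq L down up) (hS : UnionClosed S) (hdown : ¬down) (hup : up) :
    Tmin (fun n => ((L n).pts : Set Ω)) ⊆ proj S (sjoin fun n => ((L n).pts : Set Ω)) := by
  rintro _ ⟨n, a, ha, hne, rfl⟩
  simpa [hdown, hup] using h.trace_mem_proj hS ha hne

theorem tmax_subset (h : IsRegularSeq L down up) (hS : UnionClosed S) (hup : ¬up) :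
    Tmax (fun n => ((L n).pts : Set Ω)) ⊆ proj S (sjoin fun n => ((L n).pts : Set Ω)) := by
  rintro _ ⟨n, a, ha, hne, rfl⟩
  by_cases hdown : down
  · simpa [hdown, hup] using h.trace_mem_proj hS ha hne
  -- with neither `down` nor `up` every point of the join is a trace, and `proj S` is union-closed
  have hpoint : ∀ z ∈ sjoin fun n => ((L n).pts : Set Ω),
      {z} ∈ proj S (sjoin fun n => ((L n).pts : Set Ω)) := by
    intro z hz
    obtain ⟨k, hzk⟩ := Set.mem_iUnion.1 hz
    simpa [hdown, hup] using
      h.trace_mem_proj hS (Set.singleton_subset_iff.2 hzk) (Set.singleton_nonempty z)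
  rw [← Set.biUnion_of_singleton ((⋃ k < n, ((L k).pts : Set Ω)) ∪ a)]
  refine (hS.proj _).biUnion_mem ?_ (hne.mono Set.subset_union_right) fun z hz => hpoint z ?_
  · exact ((Set.finite_lt_nat n).biUnion fun k _ => (L k).pts.finite_toSet).union
      ((L n).pts.finite_toSet.subset ha)
  · rcases hz with hz | hz
    · obtain ⟨k, -, hzk⟩ := Set.mem_iUnion₂.1 hz
      exact Set.mem_iUnion.2 ⟨k, hzk⟩
    · exact Set.mem_iUnion.2 ⟨n, ha hz⟩

end IsRegularSeq

/-- Theorem (Subquotient theorem, concrete version). -/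
theorem stmt1 {Ω : Type*} (S : Set (Set Ω)) (hS : UnionClosed S)
    (hb : InfiniteBreadth S) :
    (∃ E : ℕ → Set Ω, IsSpread E ∧ Tmax E ⊆ proj S (sjoin E)) ∨
    (∃ E : ℕ → Set Ω, IsSpread E ∧ Tmin E ⊆ proj S (sjoin E)) ∨
    (∃ E : ℕ → Set Ω, IsSpread E ∧ Tort E ⊆ proj S (sjoin E)) := by
  obtain ⟨L, down, up, hL⟩ := exists_isRegularSeq hb
  by_cases hup : up
  · by_cases hdown : down
    · exact Or.inr (Or.inr ⟨_, hL.isSpread, hL.tort_subset hS hdown hup⟩)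
    · exact Or.inr (Or.inl ⟨_, hL.isSpread, hL.tmin_subset hS hdown hup⟩)
  · exact Or.inl ⟨_, hL.isSpread, hL.tmax_subset hS hup⟩
end

section
/- Let S be a union-closed set system on a set Ω, let a_1, …, a_n be subsets of Ω and let a = a_1 ∪ ⋯ ∪ a_n. If for each i the set system S ⊓ a_i has breadth at most m_i, then S ⊓ a has breadth at most m_1 + ⋯ + m_n; in particular, if S is thin in each a_i then S is thin in a. -/
open Set Filter
open scoped Classical

variable {Ω : Type*}

/-!
Each member `x` of an incompressible family `F ⊆ S ⊓ ⋃ i, a i` has a private point, which lies in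
some `a i`. The members with a private point in `a i` restrict injectively, via `x ↦ x ∩ a i`, to an
incompressible subfamily of `S ⊓ a i`, so there are at most `m i` of them.
-/

namespace Incompressible

theorem of_forall_nonempty_diff {F : Finset (Set Ω)}
    (h : ∀ x ∈ F, (x \ ⋃₀ ↑(F.erase x)).Nonempty) : Incompressible F := by
  intro F' hF' heq
  obtain ⟨x, hxF, hxF'⟩ := Finset.exists_of_ssubset hF'
  obtain ⟨ω, hωx, hωrest⟩ := h x hxF
  have : ω ∈ ⋃₀ (↑F' : Set (Set Ω)) := heq ▸ ⟨x, hxF, hωx⟩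
  obtain ⟨y, hyF', hωy⟩ := this
  have hyx : y ≠ x := fun hyx => hxF' (hyx ▸ hyF')
  exact hωrest ⟨y, Finset.mem_erase.2 ⟨hyx, hF'.subset hyF'⟩, hωy⟩

theorem nonempty_diff {F : Finset (Set Ω)} (hF : Incompressible F) {x : Set Ω}
    (hx : x ∈ F) : (x \ ⋃₀ ↑(F.erase x)).Nonempty := by
  have hsub : ⋃₀ (↑(F.erase x) : Set (Set Ω)) ⊂ ⋃₀ ↑F :=
    (sUnion_subset_sUnion (by simp)).lt_of_ne (hF _ (Finset.erase_ssubset hx))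
  obtain ⟨ω, ⟨y, hyF, hωy⟩, hωrest⟩ := exists_of_ssubset hsub
  obtain rfl : y = x := by
    by_contra hyx
    exact hωrest ⟨y, Finset.mem_erase.2 ⟨hyx, hyF⟩, hωy⟩
  exact ⟨ω, hωy, hωrest⟩

end Incompressible

theorem mem_proj_of_mem_proj {S : Set (Set Ω)} {a b x : Set Ω} (hab : a ⊆ b)
    (hx : x ∈ proj S b) : x ∩ a ∈ proj S a := by
  obtain ⟨s, hs, rfl⟩ := hx
  exact ⟨s, hs, by rw [inter_assoc, inter_eq_right.2 hab]⟩

/-- The members of `F` having a private point (one in no other member) inside `a`. -/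
noncomputable def privateIn (F : Finset (Set Ω)) (a : Set Ω) : Finset (Set Ω) :=
  F.filter fun x => ((x \ ⋃₀ ↑(F.erase x)) ∩ a).Nonempty

theorem privateIn_subset (F : Finset (Set Ω)) (a : Set Ω) : privateIn F a ⊆ F :=
  Finset.filter_subset _ _

theorem injOn_inter_privateIn (F : Finset (Set Ω)) (a : Set Ω) :
    InjOn (· ∩ a) ↑(privateIn F a) := by
  intro x hx y hy hxy
  by_contra hne
  obtain ⟨hxF, ω, ⟨hωx, hωrest⟩, hωa⟩ := Finset.mem_filter.1 hx
  have hyF := (Finset.mem_filter.1 hy).1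
  have hωy : ω ∈ y ∩ a := (show x ∩ a = y ∩ a from hxy) ▸ ⟨hωx, hωa⟩
  exact hωrest ⟨y, Finset.mem_erase.2 ⟨Ne.symm hne, hyF⟩, hωy.1⟩

theorem card_image_inter_privateIn (F : Finset (Set Ω)) (a : Set Ω) :
    ((privateIn F a).image (· ∩ a)).card = (privateIn F a).card :=
  Finset.card_image_of_injOn (injOn_inter_privateIn F a)

/-- A private point of `x` lying in `a` stays private for `x ∩ a`. -/
theorem incompressible_image_inter_privateIn (F : Finset (Set Ω)) (a : Set Ω) :
    Incompressible ((privateIn F a).image (· ∩ a)) := by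
  refine Incompressible.of_forall_nonempty_diff fun z hz => ?_
  obtain ⟨x, hx, rfl⟩ := Finset.mem_image.1 hz
  obtain ⟨_, ω, ⟨hωx, hωrest⟩, hωa⟩ := Finset.mem_filter.1 hx
  refine ⟨ω, ⟨hωx, hωa⟩, ?_⟩
  rintro ⟨_, hz', hωz'⟩
  obtain ⟨hne, hz'⟩ := Finset.mem_erase.1 hz'
  obtain ⟨y, hy, rfl⟩ := Finset.mem_image.1 hz'
  have hyx : y ≠ x := fun h => hne (h ▸ rfl)
  exact hωrest ⟨y, Finset.mem_erase.2 ⟨hyx, privateIn_subset F a hy⟩, hωz'.1⟩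

theorem card_privateIn_le {S : Set (Set Ω)} {F : Finset (Set Ω)} {a b : Set Ω} {m : ℕ}
    (hab : a ⊆ b) (hFS : ↑F ⊆ proj S b) (hm : BreadthLE (proj S a) m) :
    (privateIn F a).card ≤ m := by
  rw [← card_image_inter_privateIn]
  refine hm _ ?_ (incompressible_image_inter_privateIn F a)
  intro z hz
  obtain ⟨x, hx, rfl⟩ := Finset.mem_image.1 (Finset.mem_coe.1 hz)
  exact mem_proj_of_mem_proj hab (hFS (privateIn_subset F a hx))

theorem subset_biUnion_privateIn {ι : Type*} [Fintype ι] {F : Finset (Set Ω)}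
    {a : ι → Set Ω} (hF : Incompressible F) (hFa : ∀ x ∈ F, x ⊆ ⋃ i, a i) :
    F ⊆ Finset.univ.biUnion fun i => privateIn F (a i) := by
  intro x hx
  obtain ⟨ω, hω⟩ := hF.nonempty_diff hx
  obtain ⟨i, hωi⟩ := mem_iUnion.1 (hFa x hx hω.1)
  exact Finset.mem_biUnion.2 ⟨i, Finset.mem_univ _, Finset.mem_filter.2 ⟨hx, ω, hω, hωi⟩⟩

theorem breadthLE_proj_iUnion {ι : Type*} [Fintype ι] (S : Set (Set Ω)) (a : ι → Set Ω)
    (m : ι → ℕ) (hm : ∀ i, BreadthLE (proj S (a i)) (m i)) :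
    BreadthLE (proj S (⋃ i, a i)) (∑ i, m i) := by
  intro F hFS hF
  have hFa : ∀ x ∈ F, x ⊆ ⋃ i, a i := fun x hx => by
    obtain ⟨s, -, rfl⟩ := hFS hx
    exact inter_subset_right
  calc F.card ≤ (Finset.univ.biUnion fun i => privateIn F (a i)).card :=
        Finset.card_le_card (subset_biUnion_privateIn hF hFa)
    _ ≤ ∑ i, (privateIn F (a i)).card := Finset.card_biUnion_le
    _ ≤ ∑ i, m i := Finset.sum_le_sum fun i _ =>
        card_privateIn_le (subset_iUnion a i) hFS (hm i)

theorem finiteBreadth_proj_iUnion {ι : Type*} [Fintype ι] (S : Set (Set Ω)) (a : ι → Set Ω)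
    (h : ∀ i, FiniteBreadth (proj S (a i))) : FiniteBreadth (proj S (⋃ i, a i)) := by
  choose N hN using h
  exact ⟨∑ i, N i, breadthLE_proj_iUnion S a N hN⟩

theorem stmt2_general {Ω : Type*} (S : Set (Set Ω)) (n : ℕ)
    (a : Fin n → Set Ω) (m : Fin n → ℕ) :
    ((∀ i, BreadthLE (proj S (a i)) (m i)) →
      BreadthLE (proj S (⋃ i, a i)) (∑ i, m i)) ∧
    ((∀ i, FiniteBreadth (proj S (a i))) →
      FiniteBreadth (proj S (⋃ i, a i))) :=
  ⟨breadthLE_proj_iUnion S a m, finiteBreadth_proj_iUnion S a⟩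

/-- Breadth of a projection onto a finite union is at most the sum of the breadths;
in particular thin in each piece implies thin in the union. -/
theorem stmt2 {Ω : Type*} (S : Set (Set Ω)) (hS : UnionClosed S) (n : ℕ)
    (a : Fin n → Set Ω) (m : Fin n → ℕ) :
    ((∀ i, BreadthLE (proj S (a i)) (m i)) →
      BreadthLE (proj S (⋃ i, a i)) (∑ i, m i)) ∧
    ((∀ i, FiniteBreadth (proj S (a i))) →
      FiniteBreadth (proj S (⋃ i, a i))) :=
  stmt2_general S n a m
end

section
/- Let S be a union-closed set system on a set Ω with infinite breadth, and let p be a finite subset of Ω. Then S ⊓ (Ω \ p) has infinite breadth; that is, S is thick in the complement of p. -/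
open Set Filter
open scoped Classical

variable {Ω : Type*}

/-!
A finite family is incompressible exactly when each member has a private point, lying in it and
in no other member. Take an incompressible family of `n + |p|` members of `S` and fix private
points. At most `|p|` of them lie in `p`; the members whose private point avoids `p` keep it after
intersecting with `pᶜ`, so their traces on `pᶜ` are pairwise distinct and again incompressible.
-/

theorem incompressible_iff_forall_exists_private {F : Finset (Set Ω)} :
    Incompressible F ↔ ∀ x ∈ F, ∃ w ∈ x, ∀ y ∈ F, y ≠ x → w ∉ y := by
  constructor
  · intro hF x hx
    have hsub : ⋃₀ (↑(F.erase x) : Set (Set Ω)) ⊆ ⋃₀ ↑F :=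
      sUnion_subset_sUnion (by simp)
    obtain ⟨w, ⟨z, hzF, hwz⟩, hw⟩ :=
      exists_of_ssubset (hsub.ssubset_of_ne (hF _ (Finset.erase_ssubset hx)))
    obtain rfl : z = x := by
      by_contra hzx
      exact hw ⟨z, by simp [hzx, hzF], hwz⟩
    exact ⟨w, hwz, fun y hy hyz hwy => hw ⟨y, by simp [hyz, hy], hwy⟩⟩
  · intro h F' hF' heq
    obtain ⟨x, hxF, hxF'⟩ := Finset.exists_of_ssubset hF'
    obtain ⟨w, hwx, hw⟩ := h x hxF
    obtain ⟨y, hyF', hwy⟩ : w ∈ ⋃₀ (↑F' : Set (Set Ω)) := heq ▸ ⟨x, hxF, hwx⟩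
    exact hw y (hF'.subset hyF') (by rintro rfl; exact hxF' hyF') hwy

theorem Incompressible.mono {F G : Finset (Set Ω)} (hF : Incompressible F) (hGF : G ⊆ F) :
    Incompressible G := by
  rw [incompressible_iff_forall_exists_private] at hF ⊢
  intro x hx
  obtain ⟨w, hwx, hw⟩ := hF x (hGF hx)
  exact ⟨w, hwx, fun y hy => hw y (hGF hy)⟩

theorem infiniteBreadth_of_forall_exists_le_card {S : Set (Set Ω)}
    (h : ∀ n : ℕ, ∃ F : Finset (Set Ω), ↑F ⊆ S ∧ n ≤ F.card ∧ Incompressible F) :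
    InfiniteBreadth S := by
  intro n
  obtain ⟨F, hFS, hn, hF⟩ := h n
  obtain ⟨G, hGF, hG⟩ := Finset.exists_subset_card_eq hn
  exact ⟨G, (Finset.coe_subset.2 hGF).trans hFS, hG, hF.mono hGF⟩

theorem incompressible_image_inter_of_forall_exists_private {K : Finset (Set Ω)} {a : Set Ω}
    (h : ∀ x ∈ K, ∃ w ∈ x ∩ a, ∀ y ∈ K, y ≠ x → w ∉ y) :
    Incompressible (K.image (· ∩ a)) ∧ (K.image (· ∩ a)).card = K.card := by
  constructor
  · rw [incompressible_iff_forall_exists_private]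
    intro z hz
    obtain ⟨x, hx, rfl⟩ := Finset.mem_image.1 hz
    obtain ⟨w, hwx, hw⟩ := h x hx
    refine ⟨w, hwx, fun z' hz' hne hwz' => ?_⟩
    obtain ⟨y, hy, rfl⟩ := Finset.mem_image.1 hz'
    exact hw y hy (by rintro rfl; exact hne rfl) hwz'.1
  · refine Finset.card_image_of_injOn fun x hx y hy (hxy : x ∩ a = y ∩ a) => ?_
    by_contra hne
    obtain ⟨w, hwx, hw⟩ := h x hx
    exact hw y hy (Ne.symm hne) (hxy ▸ hwx).1

theorem Incompressible.exists_incompressible_proj_compl {F : Finset (Set Ω)}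
    (hF : Incompressible F) {p : Set Ω} (hp : p.Finite) :
    ∃ G : Finset (Set Ω), ↑G ⊆ proj ↑F pᶜ ∧ Incompressible G ∧ F.card ≤ G.card + p.ncard := by
  obtain rfl | ⟨x₀, hx₀⟩ := F.eq_empty_or_nonempty
  · exact ⟨∅, by simp, by simp [incompressible_iff_forall_exists_private], by simp⟩
  have hpriv := incompressible_iff_forall_exists_private.1 hF
  have : Nonempty Ω := ⟨(hpriv x₀ hx₀).choose⟩
  choose! w hwx hw using hpriv
  set K := F.filter (fun x => w x ∉ p)
  have hbad : (F.filter (fun x => w x ∈ p)).card ≤ p.ncard := by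
    rw [ncard_eq_toFinset_card p hp]
    refine Finset.card_le_card_of_injOn w (fun x hx => ?_) (fun x hx y hy hxy => ?_)
    · simpa using (Finset.mem_filter.1 hx).2
    · by_contra hne
      have hxF := (Finset.mem_filter.1 hx).1
      have hyF := (Finset.mem_filter.1 hy).1
      exact hw x hxF y hyF (Ne.symm hne) (hxy ▸ hwx y hyF)
  have hsplit : (F.filter (fun x => w x ∈ p)).card + K.card = F.card :=
    Finset.card_filter_add_card_filter_not _
  obtain ⟨hG, hGcard⟩ := incompressible_image_inter_of_forall_exists_private (K := K) (a := pᶜ)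
    fun x hx => by
      obtain ⟨hxF, hxp⟩ := Finset.mem_filter.1 hx
      exact ⟨w x, ⟨hwx x hxF, hxp⟩, fun y hy => hw x hxF y (Finset.mem_filter.1 hy).1⟩
  refine ⟨K.image (· ∩ pᶜ), ?_, hG, by omega⟩
  rw [Finset.coe_image]
  exact image_mono (Finset.coe_subset.2 (Finset.filter_subset _ F))

theorem stmt3_general {Ω : Type*} (S : Set (Set Ω))
    (hb : InfiniteBreadth S) (p : Set Ω) (hp : p.Finite) :
    InfiniteBreadth (proj S pᶜ) := by
  refine infiniteBreadth_of_forall_exists_le_card fun n => ?_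
  obtain ⟨F, hFS, hcard, hF⟩ := hb (n + p.ncard)
  obtain ⟨G, hGF, hG, hle⟩ := hF.exists_incompressible_proj_compl hp
  exact ⟨G, hGF.trans (image_mono hFS), by omega, hG⟩

/-- If `S` has infinite breadth and `p` is finite, then `S` is thick in `pᶜ`. -/
theorem stmt3 {Ω : Type*} (S : Set (Set Ω)) (hS : UnionClosed S)
    (hb : InfiniteBreadth S) (p : Set Ω) (hp : p.Finite) :
    InfiniteBreadth (proj S pᶜ) :=
  stmt3_general S hb p hp
end

section
/- Let S be a union-closed set system on a set Ω with infinite breadth which satisfies Condition (A). Then there exists a spread ℰ in Ω such that S ⊓ join(ℰ) contains the set system T_max(ℰ). -/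
open Set Filter
open scoped Classical

variable {Ω : Type*}

/-!
Starting from `p₀ = ∅`, build an increasing chain `p₀ ⊆ p₁ ⊆ ⋯` in `S ∪ {∅}` such that `S`
stays thick in every `p_nᶜ`. At stage `n`, Condition (A) gives an incompressible family `F` of
`n + 1` members of `S ⊖ p_n` on whose complement `S ⊖ p_n` is still thick; put
`p_{n+1} = p_n ∪ ⋃ F` and let `E_n` consist of one private point of each member of `F`. Any
nonempty `a ⊆ E_n` is cut out of `E_n` by `p_n ∪ ⋃ {f ∈ F : the point of f lies in a} ∈ S`, and
since `E_{<n} ⊆ p_n` while `E_{>n}` misses `p_{n+1}`, this set meets `join(ℰ)` in `E_{<n} ∪ a`.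
-/

section Witness

variable {F : Finset (Set Ω)}

theorem Incompressible.exists_isWitness (hF : Incompressible F) (hne : F.Nonempty) :
    ∃ Ew, IsWitness F Ew := by
  have hprivate : ∀ f ∈ F, ∃ w ∈ f, ∀ g ∈ F, g ≠ f → w ∉ g := by
    intro f hf
    have hlt : ⋃₀ (↑(F.erase f) : Set (Set Ω)) ⊂ ⋃₀ (↑F : Set (Set Ω)) :=
      ssubset_of_subset_of_ne (sUnion_subset_sUnion (by simp))
        (hF _ (Finset.erase_ssubset hf))
    obtain ⟨w, ⟨g, hgF, hwg⟩, hw⟩ := exists_of_ssubset hlt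
    have hgf : g = f := by
      by_contra h
      exact hw ⟨g, by simp [h, hgF], hwg⟩
    subst hgf
    exact ⟨w, hwg, fun g' hg' hne' hwg' => hw ⟨g', by simp [hne', hg'], hwg'⟩⟩
  obtain ⟨f₀, hf₀⟩ := hne
  have : Nonempty Ω := ⟨(hprivate f₀ hf₀).choose⟩
  choose! w hw using hprivate
  exact ⟨_, w, hw, rfl⟩

theorem IsWitness.ncard_eq_card {Ew : Set Ω} (h : IsWitness F Ew) : Ew.ncard = F.card := by
  obtain ⟨w, hw, rfl⟩ := h
  have hinj : InjOn w ↑F := by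
    intro f hf g hg hfg
    by_contra hne
    exact (hw g hg).2 f hf hne (hfg ▸ (hw f hf).1)
  rw [hinj.ncard_image, ncard_coe_finset]

theorem IsWitness.subset_sUnion {Ew : Set Ω} (h : IsWitness F Ew) :
    Ew ⊆ ⋃₀ (↑F : Set (Set Ω)) := by
  obtain ⟨w, hw, rfl⟩ := h
  rintro _ ⟨f, hf, rfl⟩
  exact ⟨f, hf, (hw f hf).1⟩

theorem IsWitness.exists_subfamily {Ew a : Set Ω} (h : IsWitness F Ew) (ha : a ⊆ Ew)
    (hane : a.Nonempty) :
    ∃ I ⊆ F, I.Nonempty ∧ ⋃₀ (↑I : Set (Set Ω)) ∩ Ew = a := by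
  obtain ⟨w, hw, rfl⟩ := h
  refine ⟨F.filter (w · ∈ a), Finset.filter_subset _ _, ?_, ?_⟩
  · obtain ⟨_, hωa⟩ := hane
    obtain ⟨f, hf, rfl⟩ := ha hωa
    exact ⟨f, Finset.mem_filter.mpr ⟨hf, hωa⟩⟩
  · ext ω
    constructor
    · rintro ⟨⟨f, hfI, hωf⟩, g, hg, rfl⟩
      obtain ⟨hf, hwf⟩ := Finset.mem_filter.mp hfI
      by_cases hgf : g = f
      · exact hgf ▸ hwf
      · exact absurd hωf ((hw g hg).2 f hf (Ne.symm hgf))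
    · intro hωa
      obtain ⟨f, hf, rfl⟩ := ha hωa
      exact ⟨⟨f, Finset.mem_filter.mpr ⟨hf, hωa⟩, (hw f hf).1⟩, f, hf, rfl⟩

end Witness

section Ominus

variable {S : Set (Set Ω)} {p : Set Ω}

theorem disjoint_sUnion_of_subset_ominus {F : Set (Set Ω)} (hF : F ⊆ ominus S p) :
    Disjoint (⋃₀ F) p := by
  refine disjoint_sUnion_left.mpr fun f hf => ?_
  obtain ⟨x, -, rfl⟩ := hF hf
  exact disjoint_sdiff_left

theorem union_mem_of_mem_ominus (hS : UnionClosed S) (hp : p ∈ insert ∅ S) {f : Set Ω}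
    (hf : f ∈ ominus S p) : p ∪ f ∈ S := by
  obtain ⟨x, hx, rfl⟩ := hf
  rw [union_sdiff_self]
  rcases hp with rfl | hp
  · rwa [empty_union]
  · exact hS p hp x hx

theorem union_sUnion_mem_of_subset_ominus (hS : UnionClosed S) (hp : p ∈ insert ∅ S)
    {I : Finset (Set Ω)} (hI : ↑I ⊆ ominus S p) (hne : I.Nonempty) :
    p ∪ ⋃₀ (↑I : Set (Set Ω)) ∈ S := by
  induction hne using Finset.Nonempty.cons_induction with
  | singleton f =>
    simpa using union_mem_of_mem_ominus hS hp (hI (by simp))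
  | cons f I hfI _ ih =>
    rw [Finset.coe_cons, sUnion_insert, union_union_distrib_left]
    rw [Finset.coe_cons, insert_subset_iff] at hI
    exact hS _ (union_mem_of_mem_ominus hS hp hI.1) _ (ih hI.2)

theorem proj_compl_union (S : Set (Set Ω)) (p U : Set Ω) :
    proj S (p ∪ U)ᶜ = proj (ominus S p) Uᶜ := by
  rw [proj, proj, ominus, image_image, compl_union]
  refine image_congr fun x _ => ?_
  rw [sdiff_eq, inter_assoc]

end Ominus

def IsThickBase (S : Set (Set Ω)) (p : Set Ω) : Prop :=
  p ∈ insert ∅ S ∧ InfiniteBreadth (proj S pᶜ)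

def IsLayer (S : Set (Set Ω)) (p q E : Set Ω) : Prop :=
  p ⊆ q ∧ Disjoint E p ∧ E ⊆ q ∧ ∀ a ⊆ E, a.Nonempty → ∃ x ∈ S, p ⊆ x ∧ x ⊆ q ∧ x ∩ E = a

section Construction

variable {S : Set (Set Ω)}

theorem isThickBase_empty (hb : InfiniteBreadth S) : IsThickBase S ∅ := by
  refine ⟨mem_insert _ _, ?_⟩
  simpa [proj] using hb

theorem IsThickBase.exists_layer (hS : UnionClosed S) (hA : CondA S) {p : Set Ω}
    (hp : IsThickBase S p) (k : ℕ) :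
    ∃ q, IsThickBase S q ∧ ∃ E : Set Ω, E.ncard = k + 1 ∧ IsLayer S p q E := by
  obtain ⟨F, hFS, hFcard, hFinc, hthick⟩ := hA (k + 1) p hp.1 hp.2
  have hFne : F.Nonempty := Finset.card_pos.mp (by omega)
  obtain ⟨Ew, hEw⟩ := hFinc.exists_isWitness hFne
  have hdisj := disjoint_sUnion_of_subset_ominus hFS
  refine ⟨p ∪ ⋃₀ ↑F, ⟨mem_insert_of_mem _ (union_sUnion_mem_of_subset_ominus hS hp.1 hFS hFne),
    by rwa [proj_compl_union]⟩, Ew, hFcard ▸ hEw.ncard_eq_card, subset_union_left,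
    hdisj.mono_left hEw.subset_sUnion, hEw.subset_sUnion.trans subset_union_right, ?_⟩
  intro a ha hane
  obtain ⟨I, hIF, hIne, hIa⟩ := hEw.exists_subfamily ha hane
  have hIS : ↑I ⊆ ominus S p := (Finset.coe_subset.mpr hIF).trans hFS
  refine ⟨p ∪ ⋃₀ ↑I, union_sUnion_mem_of_subset_ominus hS hp.1 hIS hIne, subset_union_left,
    union_subset_union_right p (sUnion_subset_sUnion (Finset.coe_subset.mpr hIF)), ?_⟩
  rw [union_inter_distrib_right, hIa,
    (hdisj.mono_left hEw.subset_sUnion).symm.inter_eq, empty_union]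

theorem exists_layers (hS : UnionClosed S) (hb : InfiniteBreadth S) (hA : CondA S) :
    ∃ p E : ℕ → Set Ω, ∀ n, (E n).ncard = n + 1 ∧ IsLayer S (p n) (p (n + 1)) (E n) := by
  have hstep (n : ℕ) (p : {p // IsThickBase S p}) :
      ∃ q : {p // IsThickBase S p}, ∃ E : Set Ω, E.ncard = n + 1 ∧ IsLayer S p q E := by
    obtain ⟨q, hq, hE⟩ := p.2.exists_layer hS hA n
    exact ⟨⟨q, hq⟩, hE⟩
  choose next E hE using hstep
  let p : ℕ → {p // IsThickBase S p} := fun n => Nat.rec ⟨∅, isThickBase_empty hb⟩ next n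
  exact ⟨fun n => (p n).1, fun n => E n (p n), fun n => hE n (p n)⟩

end Construction

section Layers

variable {S : Set (Set Ω)} {p E : ℕ → Set Ω} (hL : ∀ n, IsLayer S (p n) (p (n + 1)) (E n))
include hL

theorem monotone_of_isLayer : Monotone p :=
  monotone_nat_of_le_succ fun n => (hL n).1

theorem subset_of_isLayer_of_lt {m n : ℕ} (h : m < n) : E m ⊆ p n :=
  (hL m).2.2.1.trans (monotone_of_isLayer hL h)

theorem disjoint_of_isLayer_of_lt {m n : ℕ} (h : m < n) : Disjoint (E m) (E n) :=
  ((hL n).2.1.mono_right (subset_of_isLayer_of_lt hL h)).symm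

theorem isSpread_of_isLayer (hcard : ∀ n, (E n).ncard = n + 1) : IsSpread E := by
  have hne : ∀ n, (E n).ncard ≠ 0 := fun n => by simp [hcard n]
  refine ⟨fun n => finite_of_ncard_ne_zero (hne n), fun n => nonempty_of_ncard_ne_zero (hne n),
    fun m n hmn => ?_, ?_⟩
  · rcases hmn.lt_or_gt with h | h
    · exact disjoint_of_isLayer_of_lt hL h
    · exact (disjoint_of_isLayer_of_lt hL h).symm
  · simpa only [hcard] using tendsto_add_atTop_nat 1

theorem tmax_subset_proj_of_isLayer : Tmax E ⊆ proj S (sjoin E) := by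
  rintro _ ⟨n, a, haE, hane, rfl⟩
  obtain ⟨x, hxS, hpx, hxq, hxa⟩ := (hL n).2.2.2 a haE hane
  refine ⟨x, hxS, ?_⟩
  ext ω
  simp only [sjoin, mem_inter_iff, mem_iUnion, mem_union, exists_prop]
  constructor
  · rintro ⟨hωx, m, hωm⟩
    rcases lt_trichotomy m n with h | rfl | h
    · exact Or.inl ⟨m, h, hωm⟩
    · exact Or.inr (hxa ▸ ⟨hωx, hωm⟩)
    · exact absurd (monotone_of_isLayer hL h (hxq hωx)) ((hL m).2.1.notMem_of_mem_left hωm)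
  · rintro (⟨m, h, hωm⟩ | hωa)
    · exact ⟨hpx (subset_of_isLayer_of_lt hL h hωm), m, hωm⟩
    · rw [← hxa] at hωa
      exact ⟨hωa.1, n, hωa.2⟩

end Layers

/-- Infinite breadth plus Condition (A) yields a spread realising `T_max`. -/
theorem stmt4 {Ω : Type*} (S : Set (Set Ω)) (hS : UnionClosed S)
    (hb : InfiniteBreadth S) (hA : CondA S) :
    ∃ E : ℕ → Set Ω, IsSpread E ∧ Tmax E ⊆ proj S (sjoin E) := by
  obtain ⟨p, E, hE⟩ := exists_layers hS hb hA
  have hL : ∀ n, IsLayer S (p n) (p (n + 1)) (E n) := fun n => (hE n).2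
  exact ⟨E, isSpread_of_isLayer hL fun n => (hE n).1, tmax_subset_proj_of_isLayer hL⟩
end

section
/- Let S be a union-closed set system on a set Ω, and suppose there is a sequence (a_n)_{n≥1} of distinct members of S such that for each m ∈ ℕ the set {a_1, …, a_m} is incompressible. Then there exists a spread ℰ in Ω such that S ⊓ join(ℰ) contains T_max(ℰ). -/
open Set Filter
open scoped Classical

variable {Ω : Type*}

/-!
Incompressibility of `{a 0, …, a (m-1)}` gives, for every `j < m`, a point of `a j` lying in no
other `a i` with `i < m`. Cut the indices into consecutive blocks `[n², (n+1)²)` and let `E n`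
consist of the witnesses of the indices in block `n`, taken relative to `m = (n+1)²`. A point of
`E m` then lies in exactly one `a i` with `i < (m+1)²`, namely its own. Hence the union of the
`a i` over all blocks below `n`, together with those `a j` of block `n` whose witness lies in a
given `A ⊆ E n`, meets the join of the spread exactly in `E 0 ∪ ⋯ ∪ E (n-1) ∪ A`.
-/

theorem Incompressible.exists_mem_forall_ne_not_mem {F : Finset (Set Ω)}
    (hF : Incompressible F) {x : Set Ω} (hx : x ∈ F) :
    ∃ z ∈ x, ∀ y ∈ F, y ≠ x → z ∉ y := by
  have hsub : ⋃₀ (↑(F.erase x) : Set (Set Ω)) ⊆ ⋃₀ ↑F :=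
    sUnion_subset_sUnion (by simp)
  obtain ⟨z, ⟨y, hyF, hzy⟩, hz⟩ :=
    exists_of_ssubset (hsub.ssubset_of_ne (hF _ (Finset.erase_ssubset hx)))
  have hmem_erase : ∀ y ∈ F, y ≠ x → z ∉ y := fun y hyF hyx hzy =>
    hz ⟨y, by simpa using And.intro hyF hyx, hzy⟩
  refine ⟨z, ?_, hmem_erase⟩
  by_contra hzx
  exact hmem_erase y hyF (fun h => hzx (h ▸ hzy)) hzy

theorem UnionClosed.biUnion_mem_s7 {S : Set (Set Ω)} (hS : UnionClosed S) {ι : Type*}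
    {s : Finset ι} (hs : s.Nonempty) {f : ι → Set Ω} (hf : ∀ i ∈ s, f i ∈ S) :
    (⋃ i ∈ s, f i) ∈ S := by
  rw [← Finset.sup_set_eq_biUnion, ← Finset.sup'_eq_sup hs]
  exact Finset.sup'_mem S hS s hs f hf

def IsSeparating (a : ℕ → Set Ω) (w : ℕ → ℕ → Ω) : Prop :=
  ∀ m, ∀ j < m, w m j ∈ a j ∧ ∀ i < m, i ≠ j → w m j ∉ a i

theorem exists_isSeparating {a : ℕ → Set Ω} (hinj : Function.Injective a)
    (hinc : ∀ m : ℕ, Incompressible ((Finset.range m).image a)) :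
    ∃ w, IsSeparating a w := by
  have h : ∀ m j, j < m → ∃ z ∈ a j, ∀ i < m, i ≠ j → z ∉ a i := by
    intro m j hj
    obtain ⟨z, hz, hzF⟩ := (hinc m).exists_mem_forall_ne_not_mem
      (Finset.mem_image_of_mem a (Finset.mem_range.2 hj))
    exact ⟨z, hz, fun i hi hij =>
      hzF (a i) (Finset.mem_image_of_mem a (Finset.mem_range.2 hi)) (hinj.ne hij)⟩
  have : Nonempty Ω := let ⟨z, _⟩ := h 1 0 one_pos; ⟨z⟩
  choose! w hw using h
  exact ⟨w, fun m j hj => hw m j hj⟩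

def block (n : ℕ) : Finset ℕ := Finset.Ico (n ^ 2) ((n + 1) ^ 2)

theorem lt_of_mem_block {n m j : ℕ} (hj : j ∈ block n) (hnm : n ≤ m) : j < (m + 1) ^ 2 :=
  (Finset.mem_Ico.1 hj).2.trans_le (Nat.pow_le_pow_left (by omega) 2)

theorem eq_of_mem_block {n m j : ℕ} (hn : j ∈ block n) (hm : j ∈ block m) : n = m := by
  have below {n m : ℕ} (hn : j ∈ block n) (hm : j ∈ block m) : n < m + 1 :=
    (Nat.pow_lt_pow_iff_left two_ne_zero).1
      ((Finset.mem_Ico.1 hn).1.trans_lt (Finset.mem_Ico.1 hm).2)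
  have := below hn hm
  have := below hm hn
  omega

theorem le_card_block (n : ℕ) : n ≤ (block n).card := by
  rw [block, Nat.card_Ico]
  exact Nat.le_sub_of_add_le (by nlinarith)

def witnessSpread (w : ℕ → ℕ → Ω) (n : ℕ) : Set Ω :=
  w ((n + 1) ^ 2) '' ↑(block n)

namespace IsSeparating

variable {a : ℕ → Set Ω} {w : ℕ → ℕ → Ω}

theorem mem_of_mem_block (hw : IsSeparating a w) {n j : ℕ} (hj : j ∈ block n) :
    w ((n + 1) ^ 2) j ∈ a j :=
  (hw _ j (lt_of_mem_block hj le_rfl)).1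

theorem eq_of_mem_of_mem_block (hw : IsSeparating a w) {m i j : ℕ} (hj : j ∈ block m)
    (hi : i < (m + 1) ^ 2) (h : w ((m + 1) ^ 2) j ∈ a i) : i = j := by
  by_contra hij
  exact (hw _ j (lt_of_mem_block hj le_rfl)).2 i hi hij h

theorem eq_of_witness_eq (hw : IsSeparating a w) {n m j l : ℕ} (hj : j ∈ block n)
    (hl : l ∈ block m) (hnm : n ≤ m) (h : w ((m + 1) ^ 2) l = w ((n + 1) ^ 2) j) :
    n = m ∧ j = l := by
  have hjl : j = l := hw.eq_of_mem_of_mem_block hl (lt_of_mem_block hj hnm)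
    (h ▸ hw.mem_of_mem_block hj)
  exact ⟨eq_of_mem_block hj (hjl ▸ hl), hjl⟩

theorem isSpread_witnessSpread (hw : IsSeparating a w) : IsSpread (witnessSpread w) := by
  have hinjOn (n : ℕ) : InjOn (w ((n + 1) ^ 2)) ↑(block n) := fun j hj l hl h =>
    (hw.eq_of_witness_eq hj hl le_rfl h.symm).2
  have hcard (n : ℕ) : (witnessSpread w n).ncard = (block n).card := by
    rw [witnessSpread, (hinjOn n).ncard_image, ncard_coe_finset]
  refine ⟨fun n => (block n).finite_toSet.image _, fun n => ?_, fun m n hmn => ?_, ?_⟩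
  · refine Set.Nonempty.image _ (Finset.coe_nonempty.2 ?_)
    exact Finset.nonempty_Ico.2 (Nat.pow_lt_pow_left n.lt_succ_self two_ne_zero)
  · rw [Set.disjoint_left]
    rintro _ ⟨l, hl, rfl⟩ ⟨j, hj, h⟩
    rcases le_total n m with hnm | hmn'
    · exact hmn (hw.eq_of_witness_eq hj hl hnm h.symm).1.symm
    · exact hmn (hw.eq_of_witness_eq hl hj hmn' h).1
  · simp_rw [hcard]
    exact tendsto_atTop_mono le_card_block tendsto_id

theorem tmax_witnessSpread_subset_proj {S : Set (Set Ω)} (hS : UnionClosed S)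
    (ha : ∀ n, a n ∈ S) (hw : IsSeparating a w) :
    Tmax (witnessSpread w) ⊆ proj S (sjoin (witnessSpread w)) := by
  rintro x ⟨n, A, hA, ⟨z₀, hz₀⟩, rfl⟩
  let J : Finset ℕ := Finset.range (n ^ 2) ∪ (block n).filter (fun j => w ((n + 1) ^ 2) j ∈ A)
  have hJ (j : ℕ) : j ∈ J ↔ j < n ^ 2 ∨ j ∈ block n ∧ w ((n + 1) ^ 2) j ∈ A := by simp [J]
  obtain ⟨j₀, hj₀, rfl⟩ := hA hz₀
  refine ⟨⋃ j ∈ J, a j, hS.biUnion_mem_s7 ⟨j₀, (hJ j₀).2 (.inr ⟨hj₀, hz₀⟩)⟩ fun j _ => ha j, ?_⟩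
  ext z
  simp only [mem_inter_iff, mem_iUnion, mem_union, sjoin, exists_prop]
  constructor
  · rintro ⟨⟨j, hjJ, hzj⟩, m, l, hl, rfl⟩
    rcases lt_or_ge m n with hmn | hnm
    · exact .inl ⟨m, hmn, l, hl, rfl⟩
    rcases (hJ j).1 hjJ with hj | ⟨hj, hjA⟩
    · have hjl := hw.eq_of_mem_of_mem_block hl
        (hj.trans_le (Nat.pow_le_pow_left (by omega) 2)) hzj
      have : n ^ 2 ≤ m ^ 2 := Nat.pow_le_pow_left hnm 2
      have := (Finset.mem_Ico.1 hl).1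
      omega
    · obtain rfl := hw.eq_of_mem_of_mem_block hl (lt_of_mem_block hj hnm) hzj
      obtain rfl := eq_of_mem_block hj hl
      exact .inr hjA
  · rintro (⟨k, hk, l, hl, rfl⟩ | hz)
    · have hl_lt : l < n ^ 2 :=
        (Finset.mem_Ico.1 hl).2.trans_le (Nat.pow_le_pow_left hk 2)
      exact ⟨⟨l, (hJ l).2 (.inl hl_lt), hw.mem_of_mem_block hl⟩, k, l, hl, rfl⟩
    · obtain ⟨l, hl, rfl⟩ := hA hz
      exact ⟨⟨l, (hJ l).2 (.inr ⟨hl, hz⟩), hw.mem_of_mem_block hl⟩, n, l, hl, rfl⟩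

end IsSeparating

/-- A nested sequence of incompressible sets yields a spread realising `T_max`. -/
theorem stmt7 {Ω : Type*} (S : Set (Set Ω)) (hS : UnionClosed S)
    (a : ℕ → Set Ω) (ha : ∀ n, a n ∈ S) (hinj : Function.Injective a)
    (hinc : ∀ m : ℕ, Incompressible ((Finset.range m).image a)) :
    ∃ E : ℕ → Set Ω, IsSpread E ∧ Tmax E ⊆ proj S (sjoin E) := by
  obtain ⟨w, hw⟩ := exists_isSeparating hinj hinc
  exact ⟨witnessSpread w, hw.isSpread_witnessSpread, hw.tmax_witnessSpread_subset_proj hS ha⟩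
end

section
/- Let Ω be an infinite set with the discrete topology, let ℰ be a spread in Ω, and let (a_j)_{j≥1} be a sequence of subsets of Ω that shatters ℰ. Let βΩ be the Stone–Čech compactification of Ω, and for a ⊆ Ω write cl(a) for the closure in βΩ of the canonical image of a. Then for every sequence (c_n)_{n≥1} of subsets of ℕ which separates points of ℕ (i.e. for all k ≠ l there is n with exactly one of k ∈ c_n and l ∈ c_n holding), there exists an injective sequence (γ_k)_{k≥1} of points of βΩ such that for all k, n ∈ ℕ: γ_k ∈ cl(a_n) if and only if k ∈ c_n; consequently cl(a_n) ∩ {γ_k : k ≥ 1} = {γ_k : k ∈ c_n} for every n. -/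
/-!
Fix `k` and choose `a n` or its complement according to whether `k ∈ c n`. Shattering makes
every finite intersection of the chosen sets meet `E n` for large `n`, so they all lie in one
ultrafilter, i.e. a point `γ k` of `βΩ`. Since `Ω` is discrete, the closures of a set and of its
complement are disjoint, so `γ k ∈ cl(a n)` exactly when `a n` belongs to that ultrafilter, i.e.
when `k ∈ c n`. As `c` separates points, the `γ k` are distinct.
-/


open Set Filter
open scoped Classical

variable {Ω : Type*}

theorem disjoint_closure_image_stoneCechUnit_compl {Ω : Type*} [TopologicalSpace Ω]
    [DiscreteTopology Ω] (s : Set Ω) :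
    Disjoint (closure (stoneCechUnit '' s)) (closure (stoneCechUnit '' sᶜ)) := by
  have hχ : Continuous fun x : Ω => decide (x ∈ s) := continuous_of_discreteTopology
  set χ := stoneCechExtend hχ
  have closure_subset : ∀ (t : Set Ω) (b : Bool), (∀ x ∈ t, decide (x ∈ s) = b) →
      closure (stoneCechUnit '' t) ⊆ χ ⁻¹' {b} := fun t b ht =>
    closure_minimal
      (image_subset_iff.2 fun x hx => by simp [χ, stoneCechExtend_stoneCechUnit, ht x hx])
      ((isClosed_discrete _).preimage (continuous_stoneCechExtend hχ))
  refine Disjoint.mono (closure_subset s true fun x hx => by simp [hx])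
    (closure_subset sᶜ false fun x hx => by simpa using hx) ?_
  exact (disjoint_singleton.2 (by decide)).preimage χ

theorem Ultrafilter.exists_stoneCech_mem_closure_image_iff {Ω : Type*} [TopologicalSpace Ω]
    [DiscreteTopology Ω] (U : Ultrafilter Ω) :
    ∃ x : StoneCech Ω, ∀ s, x ∈ closure (stoneCechUnit '' s) ↔ s ∈ U := by
  set x := (U.map stoneCechUnit).lim
  have mem_closure : ∀ s ∈ U, x ∈ closure (stoneCechUnit '' s) := fun s hs =>
    mem_closure_iff_ultrafilter.2 ⟨_, image_mem_map hs, (U.map stoneCechUnit).le_nhds_lim⟩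
  refine ⟨x, fun s => ⟨fun hx => ?_, mem_closure s⟩⟩
  by_contra hs
  exact disjoint_left.1 (disjoint_closure_image_stoneCechUnit_compl s) hx
    (mem_closure _ (U.compl_mem_iff_notMem.2 hs))

theorem Ultrafilter.exists_forall_mem_of_nonempty_biInter {Ω : Type*} {y : ℕ → Set Ω}
    (hy : ∀ m, (⋂ j < m, y j).Nonempty) : ∃ U : Ultrafilter Ω, ∀ j, y j ∈ U := by
  have hanti : Antitone fun m => 𝓟 (⋂ j < m, y j) := fun m₁ m₂ hm =>
    principal_mono.2 (biInter_mono (fun j (hj : j < m₁) => hj.trans_le hm) fun _ _ => le_rfl)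
  have : (⨅ m, 𝓟 (⋂ j < m, y j)).NeBot :=
    iInf_neBot_of_directed' hanti.directed_ge fun m => principal_neBot_iff.2 (hy m)
  refine ⟨Ultrafilter.of (⨅ m, 𝓟 (⋂ j < m, y j)), fun j => Ultrafilter.of_le _ ?_⟩
  exact mem_iInf_of_mem (j + 1) (mem_principal.2 (biInter_subset_of_mem (Nat.lt_succ_self j)))

theorem Shatters.nonempty_biInter {Ω : Type*} {a E y : ℕ → Set Ω} (ha : Shatters a E)
    (hy : ∀ j, y j = a j ∨ y j = (a j)ᶜ) (m : ℕ) : (⋂ j < m, y j).Nonempty := by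
  obtain ⟨n, hn⟩ := ((ha m y fun j _ => hy j).eventually_ge_atTop 1).exists
  exact (nonempty_of_ncard_ne_zero (Nat.one_le_iff_ne_zero.1 hn)).mono inter_subset_right

theorem Shatters.exists_stoneCech_mem_closure_image_iff {Ω : Type*} [TopologicalSpace Ω]
    [DiscreteTopology Ω] {a E : ℕ → Set Ω} (ha : Shatters a E) (p : ℕ → Prop) :
    ∃ x : StoneCech Ω, ∀ n, x ∈ closure (stoneCechUnit '' a n) ↔ p n := by
  set y : ℕ → Set Ω := fun n => if p n then a n else (a n)ᶜ
  have hy : ∀ n, y n = a n ∨ y n = (a n)ᶜ := fun n => by by_cases h : p n <;> simp [y, h]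
  obtain ⟨U, hU⟩ := Ultrafilter.exists_forall_mem_of_nonempty_biInter (ha.nonempty_biInter hy)
  obtain ⟨x, hx⟩ := U.exists_stoneCech_mem_closure_image_iff
  refine ⟨x, fun n => (hx _).trans ⟨fun h => ?_, fun h => by simpa [y, h] using hU n⟩⟩
  by_contra hp
  exact U.compl_mem_iff_notMem.1 (by simpa [y, hp] using hU n) h

theorem stmt8_general {Ω : Type*} [TopologicalSpace Ω] [DiscreteTopology Ω]
    (E : ℕ → Set Ω)
    (a : ℕ → Set Ω) (ha : Shatters a E)
    (c : ℕ → Set ℕ)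
    (hsep : ∀ k l : ℕ, k ≠ l →
      ∃ n, (k ∈ c n ∧ l ∉ c n) ∨ (k ∉ c n ∧ l ∈ c n)) :
    ∃ γ : ℕ → StoneCech Ω, Function.Injective γ ∧
      (∀ k n : ℕ, γ k ∈ closure (stoneCechUnit '' a n) ↔ k ∈ c n) ∧
      ∀ n : ℕ, closure (stoneCechUnit '' a n) ∩ Set.range γ = γ '' c n := by
  choose γ hγ using fun k => ha.exists_stoneCech_mem_closure_image_iff (fun n => k ∈ c n)
  refine ⟨γ, fun k l hkl => ?_, hγ, fun n => ?_⟩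
  · by_contra hne
    obtain ⟨n, ⟨hk, hl⟩ | ⟨hk, hl⟩⟩ := hsep k l hne
    · exact hl ((hγ l n).1 (hkl ▸ (hγ k n).2 hk))
    · exact hk ((hγ k n).1 (hkl ▸ (hγ l n).2 hl))
  · ext z
    constructor
    · rintro ⟨hz, k, rfl⟩
      exact ⟨k, (hγ k n).1 hz, rfl⟩
    · rintro ⟨k, hk, rfl⟩
      exact ⟨(hγ k n).2 hk, k, rfl⟩

/-- A sequence shattering a spread generates, in the Stone–Čech compactification,
a universal concrete semilattice. -/
theorem stmt8 {Ω : Type*} [TopologicalSpace Ω] [DiscreteTopology Ω] [Infinite Ω]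
    (E : ℕ → Set Ω) (hE : IsSpread E)
    (a : ℕ → Set Ω) (ha : Shatters a E)
    (c : ℕ → Set ℕ)
    (hsep : ∀ k l : ℕ, k ≠ l →
      ∃ n, (k ∈ c n ∧ l ∉ c n) ∨ (k ∉ c n ∧ l ∈ c n)) :
    ∃ γ : ℕ → StoneCech Ω, Function.Injective γ ∧
      (∀ k n : ℕ, γ k ∈ closure (stoneCechUnit '' a n) ↔ k ∈ c n) ∧
      ∀ n : ℕ, closure (stoneCechUnit '' a n) ∩ Set.range γ = γ '' c n :=
  stmt8_general E a ha c hsep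
end

section
/- Let S be a union-closed set system on a set Ω, let ℰ = (E_n)_{n≥1} be a spread in Ω, and let 𝒞 be a finite partition of Ω that colours ℰ. Then at least one of the following holds: (a) there exist an infinite set N ⊆ ℕ and a member y ∈ S such that y halves C with respect to (E_n)_{n∈N} for every C ∈ 𝒞; or (b) there exists a spread F refining ℰ such that 𝒞 colours F and is S-decisive for F. -/
open Set Filter
open scoped Classical

variable {Ω : Type*}

/-!
Suppose no refinement of `ℰ` coloured by `𝒞` is `S`-decisive. Then one builds, one colour
at a time, a member `u ∈ S` and a subsequence of `ℰ` along which `u` contains unboundedly many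
points of each colour treated so far, while its complement still contains unboundedly many
points of every colour. To treat a new colour `c'`, apply non-decisiveness with `C₀ = c'` to the
refinement `n ↦ E_n \ u`: it produces `x ∈ S` with many points of `c'` there whose complement
also has many points of every colour. Along a further subsequence, `u ∪ x ∈ S` then handles
`c'` as well.
-/

lemma exists_strictMono_forall_of_antitone {P : ℕ → ℕ → Prop} (hanti : ∀ n, Antitone (P · n))
    (hbdd : ∀ n, ∃ B, ¬ P B n) (h : ∀ B, ∃ n, P B n) :
    ∃ τ : ℕ → ℕ, StrictMono τ ∧ ∀ B, P B (τ B) := by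
  choose b hb using hbdd
  refine extraction_forall_of_frequently fun B => frequently_atTop.2 fun m => ?_
  obtain ⟨n, hn⟩ := h (max B ((Finset.range m).sup b))
  refine ⟨n, ?_, hanti n (le_max_left _ _) hn⟩
  by_contra! hnm
  exact hb n (hanti n ((Finset.le_sup (Finset.mem_range.2 hnm)).trans (le_max_right _ _)) hn)

lemma StrictMono.map_atTop_eq {σ : ℕ → ℕ} (hσ : StrictMono σ) :
    map σ atTop = atTop ⊓ 𝓟 (range σ) := by
  rw [← map_comap, comap_embedding_atTop (fun _ _ => hσ.le_iff_le) fun n => ⟨n, hσ.le_apply⟩]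

lemma tendsto_ncard_of_subset {ι : Type*} {l : Filter ι} {A B : ι → Set Ω}
    (hB : ∀ i, (B i).Finite) (hAB : ∀ i, A i ⊆ B i)
    (hA : Tendsto (fun i => (A i).ncard) l atTop) :
    Tendsto (fun i => (B i).ncard) l atTop :=
  tendsto_atTop_mono (fun i => ncard_le_ncard (hAB i) (hB i)) hA

lemma IsPartitionC.nonempty [Nonempty Ω] {C : Finset (Set Ω)} (hC : IsPartitionC C) :
    C.Nonempty := by
  obtain ⟨c, hc, -⟩ : Classical.arbitrary Ω ∈ ⋃₀ (C : Set (Set Ω)) := hC.2 ▸ mem_univ _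
  exact ⟨c, hc⟩

section Spreads

variable {E F G : ℕ → Set Ω}

lemma IsSpread.refines_of_subset (hE : IsSpread E) {σ : ℕ → ℕ} (hσ : Function.Injective σ)
    (hsub : ∀ j, F j ⊆ E (σ j)) (hne : ∀ j, (F j).Nonempty)
    (hF : Tendsto (fun j => (F j).ncard) atTop atTop) : Refines F E :=
  ⟨⟨fun j => (hE.1 _).subset (hsub j), hne,
      fun m n hmn => (hE.2.2.1 _ _ (hσ.ne hmn)).mono (hsub m) (hsub n), hF⟩, σ, hσ, hsub⟩

lemma IsSpread.refines_comp (hE : IsSpread E) {σ : ℕ → ℕ} (hσ : StrictMono σ) :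
    Refines (E ∘ σ) E :=
  hE.refines_of_subset hσ.injective (fun _ => subset_rfl) (fun _ => hE.2.1 _)
    (hE.2.2.2.comp hσ.tendsto_atTop)

lemma Refines.trans (hFG : Refines F G) (hGE : Refines G E) : Refines F E := by
  obtain ⟨hF, f, hf, hFG⟩ := hFG
  obtain ⟨-, g, hg, hGE⟩ := hGE
  exact ⟨hF, g ∘ f, hg.comp hf, fun j => (hFG j).trans (hGE _)⟩

end Spreads

def SeparatesAlong (u : Set Ω) (D C : Finset (Set Ω)) (E : ℕ → Set Ω) : Prop :=
  (∀ c ∈ D, Tendsto (fun n => (u ∩ c ∩ E n).ncard) atTop atTop) ∧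
  ∀ c ∈ C, Tendsto (fun n => (uᶜ ∩ c ∩ E n).ncard) atTop atTop

namespace SeparatesAlong

variable {S : Set (Set Ω)} {C D : Finset (Set Ω)} {E : ℕ → Set Ω} {u : Set Ω}

lemma ne_empty (h : SeparatesAlong u D C E) (hD : D.Nonempty) : u ≠ ∅ := by
  rintro rfl
  obtain ⟨c, hc⟩ := hD
  exact not_tendsto_const_atTop 0 atTop (by simpa using h.1 c hc)

lemma halves {σ : ℕ → ℕ} (hσ : StrictMono σ) (h : SeparatesAlong u C C (E ∘ σ))
    {c : Set Ω} (hc : c ∈ C) : Halves u c E (range σ) := by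
  rw [Halves, ← hσ.map_atTop_eq, tendsto_map'_iff, tendsto_map'_iff]
  constructor
  · refine (h.1 c hc).congr fun n => ?_
    rw [Function.comp_apply, inter_comm c u]; rfl
  · refine (h.2 c hc).congr fun n => ?_
    rw [Function.comp_apply, sdiff_eq, inter_comm c uᶜ]; rfl

lemma exists_union_insert (hE : IsSpread E) (hC : C.Nonempty)
    (hnd : ∀ F, Refines F E → Colours C F → ¬ Decisive S C F)
    (hu : SeparatesAlong u D C E) {c' : Set Ω} (hc' : c' ∈ C) :
    ∃ τ : ℕ → ℕ, StrictMono τ ∧ ∃ x ∈ S, SeparatesAlong (u ∪ x) (insert c' D) C (E ∘ τ) := by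
  obtain ⟨c₀, hc₀⟩ := hC
  obtain ⟨n₀, hn₀⟩ := eventually_atTop.1 ((hu.2 c₀ hc₀).eventually_gt_atTop 0)
  set G : ℕ → Set Ω := fun j => uᶜ ∩ E (j + n₀) with hG
  have hEfin : ∀ n, (E n).Finite := hE.1
  have hGcol : Colours C G := fun c hc => by
    have hcG : ∀ j, c ∩ G j = uᶜ ∩ c ∩ E (j + n₀) := fun j => by
      rw [hG, inter_left_comm, inter_assoc]
    refine ((hu.2 c hc).comp (tendsto_add_atTop_nat n₀)).congr fun j => ?_
    rw [hcG]; rfl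
  have hGref : Refines G E :=
    hE.refines_of_subset (add_left_injective n₀) (fun _ => inter_subset_right)
      (fun j => (nonempty_of_ncard_ne_zero (hn₀ _ (Nat.le_add_left _ _)).ne').mono
        fun _ h => ⟨h.1.1, h.2⟩)
      (tendsto_ncard_of_subset (fun _ => (hEfin _).subset inter_subset_right)
        (fun _ => inter_subset_right) (hGcol c₀ hc₀))
  obtain ⟨x, hxS, hx⟩ : ∃ x ∈ S, ∀ B, ∃ n,
      B < (x ∩ c' ∩ G n).ncard ∧ ∀ c ∈ C, B < (xᶜ ∩ c ∩ G n).ncard := by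
    have := hnd G hGref hGcol
    simp only [Decisive, not_exists, not_and, not_forall, not_or, not_le, exists_prop] at this
    exact this c' hc'
  obtain ⟨τ, hτ, hτx⟩ := exists_strictMono_forall_of_antitone
    (fun _ _ _ hB h => ⟨hB.trans_lt h.1, fun c hc => hB.trans_lt (h.2 c hc)⟩)
    (fun n => ⟨(x ∩ c' ∩ G n).ncard, fun h => h.1.false⟩) hx
  have hfin : ∀ (v : Set Ω) j, (v ∩ E (τ j + n₀)).Finite := fun _ _ =>
    (hEfin _).subset inter_subset_right
  refine ⟨fun j => τ j + n₀, hτ.add_const n₀, x, hxS, fun c hc => ?_, fun c hc => ?_⟩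
  · rcases Finset.mem_insert.1 hc with rfl | hcD
    · exact tendsto_ncard_of_subset (hfin _) (fun j ω h => ⟨⟨Or.inr h.1.1, h.1.2⟩, h.2.2⟩)
        (tendsto_atTop_mono (fun j => (hτx j).1.le) tendsto_id)
    · exact tendsto_ncard_of_subset (hfin _) (fun j ω h => ⟨⟨Or.inl h.1.1, h.1.2⟩, h.2⟩)
        ((hu.1 c hcD).comp (hτ.add_const n₀).tendsto_atTop)
  · exact tendsto_ncard_of_subset (hfin _)
      (fun j ω h => ⟨⟨fun hux => hux.elim h.2.1 h.1.1, h.1.2⟩, h.2.2⟩)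
      (tendsto_atTop_mono (fun j => ((hτx j).2 c hc).le) tendsto_id)

end SeparatesAlong

lemma exists_separatesAlong {S : Set (Set Ω)} {C D : Finset (Set Ω)} {E : ℕ → Set Ω}
    (hS : UnionClosed S) (hE : IsSpread E) (hC : C.Nonempty) (hcol : Colours C E)
    (hnd : ∀ F, Refines F E → Colours C F → ¬ Decisive S C F) (hD : D ⊆ C) :
    ∃ σ : ℕ → ℕ, StrictMono σ ∧ ∃ u ∈ insert ∅ S, SeparatesAlong u D C (E ∘ σ) := by
  induction D using Finset.induction_on with
  | empty =>
    exact ⟨id, strictMono_id, ∅, mem_insert _ _, by simp, fun c hc => by simpa using hcol c hc⟩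
  | insert c D _ ih =>
    obtain ⟨σ, hσ, u, hu, hsep⟩ := ih ((Finset.subset_insert _ _).trans hD)
    have hEσ := hE.refines_comp hσ
    obtain ⟨τ, hτ, x, hxS, hsep'⟩ := hsep.exists_union_insert hEσ.1 hC
      (fun F hF => hnd F (hF.trans hEσ)) (hD (Finset.mem_insert_self _ _))
    refine ⟨σ ∘ τ, hσ.comp hτ, u ∪ x, ?_, hsep'⟩
    rcases hu with rfl | hu
    · simpa using mem_insert_of_mem _ hxS
    · exact mem_insert_of_mem _ (hS u hu x hxS)

/-- Inductive step lemma: either some member of `S` halves every colour class along a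
subsequence, or the colouring is decisive on a refinement. -/
theorem stmt11 {Ω : Type*} (S : Set (Set Ω)) (hS : UnionClosed S)
    (E : ℕ → Set Ω) (hE : IsSpread E)
    (C : Finset (Set Ω)) (hC : IsPartitionC C) (hcol : Colours C E) :
    (∃ N : Set ℕ, N.Infinite ∧ ∃ y ∈ S, ∀ c ∈ C, Halves y c E N) ∨
    (∃ F : ℕ → Set Ω, Refines F E ∧ Colours C F ∧ Decisive S C F) := by
  by_cases hdec : ∃ F : ℕ → Set Ω, Refines F E ∧ Colours C F ∧ Decisive S C F
  · exact Or.inr hdec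
  push Not at hdec
  have : Nonempty Ω := ⟨(hE.2.1 0).some⟩
  have hCne : C.Nonempty := hC.nonempty
  obtain ⟨σ, hσ, u, hu, hsep⟩ := exists_separatesAlong hS hE hCne hcol hdec subset_rfl
  exact Or.inl ⟨range σ, infinite_range_of_injective hσ.injective, u,
    hu.resolve_left (hsep.ne_empty hCne), fun c hc => hsep.halves hσ hc⟩
end

section
/- Let 𝒮 be a union-closed set system on a set Ω and let 𝒮' be a union-closed set system on a set Ω', and suppose there is a bijection φ : 𝒮 → 𝒮' satisfying φ(x ∪ y) = φ(x) ∪ φ(y) for all x, y ∈ 𝒮 (so 𝒮 and 𝒮' are isomorphic semilattices). If there exists a spread ℰ in Ω such that 𝒮 ⊓ join(ℰ) contains T_max(ℰ), then there exists a spread ℰ' in Ω' such that 𝒮' ⊓ join(ℰ') contains T_max(ℰ'). -/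
open Set Filter
open scoped Classical

variable {Ω : Type*}

/-!
A union-closed `S` whose trace on `join E` contains `T_max(E)` contains a copy of `T_max(E)`:
the union of chosen preimages of the members `E_{<n} ∪ {e}` is a union-preserving section of
the trace map. Composed with `φ` it gives an injective union-preserving map `f` from `T_max(E)`
into `S'`. Once the levels with fewer than two points are discarded, each `e ∈ E n` has a
witness `w e ∈ f (E_{<n} ∪ {e}) \ f (E_{<n} ∪ (E n \ {e}))`, as the union of these two members
is `E_{<n+1}`. Every member of `T_max(E)` either contains `E_{<n} ∪ {e}` or lies inside
`E_{<n} ∪ (E n \ {e})`, so `w e ∈ f x ↔ e ∈ x` by monotonicity. Hence `w` is injective and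
`T_max` of the spread `(w '' E n)` lies in the trace of `f '' T_max(E) ⊆ S'`.
-/

section

open Function

variable {Ω' : Type*} {E : ℕ → Set Ω}

lemma mem_iUnion_lt_iff (hd : Pairwise (Disjoint on E)) {e : Ω} {m n : ℕ} (he : e ∈ E m) :
    e ∈ ⋃ k < n, E k ↔ m < n := by
  simp only [mem_iUnion, exists_prop]
  refine ⟨fun ⟨k, hk, hek⟩ => ?_, fun h => ⟨m, h, he⟩⟩
  obtain rfl : m = k := hd.eq (not_disjoint_iff.2 ⟨e, he, hek⟩)
  exact hk

lemma mem_iUnion_lt_union_iff (hd : Pairwise (Disjoint on E)) {e : Ω} {a : Set Ω} {m n : ℕ}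
    (ha : a ⊆ E n) (he : e ∈ E m) : e ∈ (⋃ k < n, E k) ∪ a ↔ m < n ∨ m = n ∧ e ∈ a := by
  rw [mem_union, mem_iUnion_lt_iff hd he]
  refine or_congr_right ⟨fun hea => ⟨hd.eq (not_disjoint_iff.2 ⟨e, he, ha hea⟩), hea⟩, And.right⟩

namespace Tmax

lemma subset_sjoin {x : Set Ω} (hx : x ∈ Tmax E) : x ⊆ sjoin E := by
  obtain ⟨n, a, ha, -, rfl⟩ := hx
  exact union_subset (iUnion₂_subset fun k _ => subset_iUnion E k) (ha.trans (subset_iUnion E n))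

lemma finite (hfin : ∀ n, (E n).Finite) {x : Set Ω} (hx : x ∈ Tmax E) : x.Finite := by
  obtain ⟨n, a, ha, -, rfl⟩ := hx
  exact ((finite_lt_nat n).biUnion fun k _ => hfin k).union ((hfin n).subset ha)

lemma nonempty {x : Set Ω} (hx : x ∈ Tmax E) : x.Nonempty := by
  obtain ⟨n, a, -, ⟨e, he⟩, rfl⟩ := hx
  exact ⟨e, Or.inr he⟩

lemma singleton_mem {e : Ω} {n : ℕ} (he : e ∈ E n) : (⋃ k < n, E k) ∪ {e} ∈ Tmax E :=
  ⟨n, {e}, singleton_subset_iff.2 he, singleton_nonempty e, rfl⟩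

lemma subset_of_mem (hd : Pairwise (Disjoint on E)) {x : Set Ω} (hx : x ∈ Tmax E) {e : Ω}
    {m : ℕ} (he : e ∈ E m) (hex : e ∈ x) : (⋃ k < m, E k) ∪ {e} ⊆ x := by
  obtain ⟨n, a, ha, -, rfl⟩ := hx
  rw [mem_iUnion_lt_union_iff hd ha he] at hex
  rintro ω (hω | rfl)
  · obtain ⟨k, hk, hωk⟩ : ∃ k < m, ω ∈ E k := by simpa using hω
    exact (mem_iUnion_lt_union_iff hd ha hωk).2 (Or.inl (by omega))
  · exact (mem_iUnion_lt_union_iff hd ha he).2 hex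

lemma subset_of_notMem (hd : Pairwise (Disjoint on E)) {x : Set Ω} (hx : x ∈ Tmax E) {e : Ω}
    {n : ℕ} (he : e ∈ E n) (hex : e ∉ x) : x ⊆ (⋃ k < n, E k) ∪ (E n \ {e}) := by
  obtain ⟨m, b, hb, hbne, rfl⟩ := hx
  intro ω hω
  obtain ⟨k, hωk⟩ := mem_iUnion.1 (subset_sjoin ⟨m, b, hb, hbne, rfl⟩ hω)
  rw [mem_iUnion_lt_union_iff hd hb he, not_or, not_lt, not_and] at hex
  rw [mem_iUnion_lt_union_iff hd hb hωk] at hω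
  rw [mem_iUnion_lt_union_iff hd sdiff_subset hωk]
  rcases hω with hkm | ⟨rfl, hωb⟩
  · exact Or.inl (hkm.trans_le hex.1)
  · rcases hex.1.lt_or_eq with hkn | rfl
    · exact Or.inl hkn
    · exact Or.inr ⟨rfl, hb hωb, fun hωe => hex.2 rfl (hωe ▸ hωb)⟩

end Tmax

lemma monotoneOn_of_map_sup {α β : Type*} [SemilatticeSup α] [SemilatticeSup β] {T : Set α}
    {f : α → β} (hf : ∀ x ∈ T, ∀ y ∈ T, f (x ⊔ y) = f x ⊔ f y) : MonotoneOn f T :=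
  fun x hx y hy hxy => by
    rw [← sup_eq_right.2 hxy, hf x hx y hy]
    exact le_sup_left

lemma exists_mem_map_iff (hd : Pairwise (Disjoint on E)) {f : Set Ω → Set Ω'}
    (hinj : InjOn f (Tmax E)) (hf : ∀ x ∈ Tmax E, ∀ y ∈ Tmax E, f (x ∪ y) = f x ∪ f y)
    {n : ℕ} (hnt : (E n).Nontrivial) {e : Ω} (he : e ∈ E n) :
    ∃ w, ∀ x ∈ Tmax E, w ∈ f x ↔ e ∈ x := by
  have hlow : (⋃ k < n, E k) ∪ {e} ∈ Tmax E := Tmax.singleton_mem he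
  have hhigh : (⋃ k < n, E k) ∪ (E n \ {e}) ∈ Tmax E :=
    ⟨n, _, sdiff_subset, hnt.exists_ne e |>.imp fun _ h => ⟨h.1, h.2⟩, rfl⟩
  have hfull : (⋃ k < n, E k) ∪ E n ∈ Tmax E := ⟨n, _, subset_rfl, hnt.nonempty, rfl⟩
  have hmono := monotoneOn_of_map_sup hf
  have hnsub : ¬ f ((⋃ k < n, E k) ∪ {e}) ⊆ f ((⋃ k < n, E k) ∪ (E n \ {e})) := by
    intro hsub
    have hunion : ((⋃ k < n, E k) ∪ {e}) ∪ ((⋃ k < n, E k) ∪ (E n \ {e})) =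
        (⋃ k < n, E k) ∪ E n := by
      rw [← union_union_distrib_left, singleton_union, insert_sdiff_singleton,
        insert_eq_of_mem he]
    have := hf _ hlow _ hhigh
    rw [hunion, union_eq_right.2 hsub] at this
    have heq := hinj hfull hhigh this
    have : e ∈ (⋃ k < n, E k) ∪ (E n \ {e}) := heq ▸ Or.inr he
    rw [mem_iUnion_lt_union_iff hd sdiff_subset he] at this
    exact this.elim (lt_irrefl n) fun h => h.2.2 rfl
  obtain ⟨w, hwlow, hwhigh⟩ := not_subset.1 hnsub
  exact ⟨w, fun x hx => ⟨fun hwx => by_contra fun hex =>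
    hwhigh (hmono hx hhigh (Tmax.subset_of_notMem hd hx he hex) hwx),
    fun hex => hmono hlow hx (Tmax.subset_of_mem hd hx he hex) hwlow⟩⟩

lemma injOn_of_mem_map_iff (hd : Pairwise (Disjoint on E)) {f : Set Ω → Set Ω'} {W : Ω → Ω'}
    (hW : ∀ e ∈ sjoin E, ∀ x ∈ Tmax E, W e ∈ f x ↔ e ∈ x) : InjOn W (sjoin E) := by
  intro e he e' he' hWe
  obtain ⟨m, hem⟩ := mem_iUnion.1 he
  obtain ⟨m', hem'⟩ := mem_iUnion.1 he'
  have h : e' ∈ (⋃ k < m, E k) ∪ {e} := (hW e' he' _ (Tmax.singleton_mem hem)).1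
    (hWe ▸ (hW e he _ (Tmax.singleton_mem hem)).2 (Or.inr rfl))
  have h' : e ∈ (⋃ k < m', E k) ∪ {e'} := (hW e he _ (Tmax.singleton_mem hem')).1
    (hWe ▸ (hW e' he' _ (Tmax.singleton_mem hem')).2 (Or.inr rfl))
  rw [mem_iUnion_lt_union_iff hd (singleton_subset_iff.2 hem) hem'] at h
  rw [mem_iUnion_lt_union_iff hd (singleton_subset_iff.2 hem') hem] at h'
  rcases h with h | ⟨-, h⟩
  · rcases h' with h' | ⟨-, h'⟩
    · omega
    · exact h'
  · exact h.symm

lemma inter_image_sjoin_of_mem_map_iff {f : Set Ω → Set Ω'} {W : Ω → Ω'}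
    (hW : ∀ e ∈ sjoin E, ∀ x ∈ Tmax E, W e ∈ f x ↔ e ∈ x) {x : Set Ω} (hx : x ∈ Tmax E) :
    f x ∩ W '' sjoin E = W '' x := by
  ext ω
  constructor
  · rintro ⟨hωx, e, he, rfl⟩
    exact ⟨e, (hW e he x hx).1 hωx, rfl⟩
  · rintro ⟨e, hex, rfl⟩
    have he := Tmax.subset_sjoin hx hex
    exact ⟨(hW e he x hx).2 hex, e, he, rfl⟩

lemma sjoin_image (W : Ω → Ω') : sjoin (fun n => W '' E n) = W '' sjoin E :=
  (image_iUnion).symm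

lemma tmax_image_subset (W : Ω → Ω') :
    Tmax (fun n => W '' E n) ⊆ (W '' ·) '' Tmax E := by
  rintro _ ⟨n, a', ha', hne', rfl⟩
  refine ⟨(⋃ k < n, E k) ∪ (E n ∩ W ⁻¹' a'), ⟨n, _, inter_subset_left, ?_, rfl⟩, ?_⟩
  · rw [← image_nonempty, image_inter_preimage, inter_eq_right.2 ha']
    exact hne'
  · dsimp only at ha' ⊢
    rw [image_union, image_iUnion₂, image_inter_preimage, inter_eq_right.2 ha']

lemma IsSpread.image {W : Ω → Ω'} (hE : IsSpread E) (hW : InjOn W (sjoin E)) :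
    IsSpread fun n => W '' E n := by
  obtain ⟨hfin, hne, hd, htend⟩ := hE
  refine ⟨fun n => (hfin n).image W, fun n => (hne n).image W, fun m n hmn => ?_, ?_⟩
  · rw [disjoint_iff_inter_eq_empty, ← hW.image_inter (subset_iUnion E m) (subset_iUnion E n),
      (hd m n hmn).inter_eq, image_empty]
  · simpa only [(hW.mono (subset_iUnion E _)).ncard_image] using htend

theorem exists_spread_tmax_subset_proj_image (hE : IsSpread E) (hnt : ∀ n, (E n).Nontrivial)
    {f : Set Ω → Set Ω'} (hinj : InjOn f (Tmax E))
    (hf : ∀ x ∈ Tmax E, ∀ y ∈ Tmax E, f (x ∪ y) = f x ∪ f y) :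
    ∃ E' : ℕ → Set Ω', IsSpread E' ∧ Tmax E' ⊆ proj (f '' Tmax E) (sjoin E') := by
  have hpoint : ∀ e ∈ sjoin E, ∃ w, ∀ x ∈ Tmax E, w ∈ f x ↔ e ∈ x := fun e he =>
    let ⟨n, hen⟩ := mem_iUnion.1 he
    exists_mem_map_iff hE.2.2.1 hinj hf (hnt n) hen
  obtain ⟨e₀, he₀⟩ := hE.2.1 0
  obtain ⟨w₀, -⟩ := hpoint e₀ (mem_iUnion_of_mem 0 he₀)
  have : Nonempty Ω' := ⟨w₀⟩
  choose! W hW using hpoint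
  refine ⟨fun n => W '' E n, hE.image (injOn_of_mem_map_iff hE.2.2.1 hW), fun y hy => ?_⟩
  obtain ⟨x, hx, rfl⟩ := tmax_image_subset W hy
  exact ⟨f x, mem_image_of_mem f hx, by
    rw [sjoin_image]
    exact inter_image_sjoin_of_mem_map_iff hW hx⟩

theorem exists_section_of_tmax_subset_proj {S : Set (Set Ω)} (hS : UnionClosed S)
    (hd : Pairwise (Disjoint on E)) (hfin : ∀ n, (E n).Finite)
    (hT : Tmax E ⊆ proj S (sjoin E)) :
    ∃ g : Set Ω → Set Ω, (∀ x ∈ Tmax E, g x ∈ S ∧ g x ∩ sjoin E = x) ∧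
      ∀ x y, g (x ∪ y) = g x ∪ g y := by
  have hpoint : ∀ e, ∃ y, ∀ n, e ∈ E n → y ∈ S ∧ y ∩ sjoin E = (⋃ k < n, E k) ∪ {e} := by
    intro e
    by_cases he : ∃ n, e ∈ E n
    · obtain ⟨n, hen⟩ := he
      obtain ⟨y, hyS, hy⟩ := hT (Tmax.singleton_mem hen)
      refine ⟨y, fun m hem => ?_⟩
      obtain rfl : m = n := hd.eq (not_disjoint_iff.2 ⟨e, hem, hen⟩)
      exact ⟨hyS, hy⟩
    · exact ⟨∅, fun n hen => (he ⟨n, hen⟩).elim⟩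
  choose X hX using hpoint
  refine ⟨fun x => ⋃ e ∈ x, X e, fun x hx => ⟨?_, ?_⟩, fun x y => biUnion_union x y X⟩
  · refine SupClosed.biSup_mem_of_nonempty hS (Tmax.finite hfin hx) (Tmax.nonempty hx)
      fun e he => ?_
    obtain ⟨n, hen⟩ := mem_iUnion.1 (Tmax.subset_sjoin hx he)
    exact (hX e n hen).1
  · rw [iUnion₂_inter]
    refine subset_antisymm (iUnion₂_subset fun e he => ?_) fun e he => ?_
    all_goals obtain ⟨n, hen⟩ := mem_iUnion.1 (Tmax.subset_sjoin hx he)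
    · rw [(hX e n hen).2]
      exact Tmax.subset_of_mem hd hx hen he
    · refine mem_iUnion₂_of_mem he ?_
      rw [(hX e n hen).2]
      exact Or.inr rfl

lemma IsSpread.comp_add (hE : IsSpread E) (N : ℕ) : IsSpread fun n => E (n + N) :=
  ⟨fun _ => hE.1 _, fun _ => hE.2.1 _, fun _ _ hmn => hE.2.2.1 _ _ (by omega),
    hE.2.2.2.comp (tendsto_add_atTop_nat N)⟩

lemma tmax_comp_add_subset_proj {S : Set (Set Ω)} (hd : Pairwise (Disjoint on E))
    (hT : Tmax E ⊆ proj S (sjoin E)) (N : ℕ) :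
    Tmax (fun n => E (n + N)) ⊆ proj S (sjoin fun n => E (n + N)) := by
  rintro _ ⟨n, a, ha, hne, rfl⟩
  obtain ⟨y, hyS, hy⟩ := hT ⟨n + N, a, ha, hne, rfl⟩
  have hd' : Pairwise (Disjoint on fun n => E (n + N)) := fun _ _ hmn => hd (by omega)
  have hmem : ∀ m, ∀ ω ∈ E (m + N), ω ∈ y ↔ ω ∈ (⋃ k < n, E (k + N)) ∪ a := fun m ω hω => by
    rw [mem_iUnion_lt_union_iff hd' ha hω, ← add_lt_add_iff_right N,
      ← add_left_inj N (b := m) (c := n), ← mem_iUnion_lt_union_iff hd ha hω, ← hy]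
    exact ⟨fun h => ⟨h, mem_iUnion_of_mem _ hω⟩, And.left⟩
  refine ⟨y, hyS, subset_antisymm (fun ω hω => ?_) fun ω hω => ?_⟩
  · obtain ⟨hωy, hωF⟩ := hω
    obtain ⟨m, hωm⟩ := mem_iUnion.1 hωF
    exact (hmem m ω hωm).1 hωy
  · have hωF := Tmax.subset_sjoin (E := fun n => E (n + N)) ⟨n, a, ha, hne, rfl⟩ hω
    obtain ⟨m, hωm⟩ := mem_iUnion.1 hωF
    exact ⟨(hmem m ω hωm).2 hω, hωF⟩

end

theorem stmt13_general {Ω Ω' : Type*} (S : Set (Set Ω)) (S' : Set (Set Ω'))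
    (hS : UnionClosed S)
    (φ : Set Ω → Set Ω') (hbij : Set.BijOn φ S S')
    (hhom : ∀ x ∈ S, ∀ y ∈ S, φ (x ∪ y) = φ x ∪ φ y)
    (h : ∃ E : ℕ → Set Ω, IsSpread E ∧ Tmax E ⊆ proj S (sjoin E)) :
    ∃ E' : ℕ → Set Ω', IsSpread E' ∧ Tmax E' ⊆ proj S' (sjoin E') := by
  obtain ⟨E, hE, hT⟩ := h
  obtain ⟨N, hN⟩ := eventually_atTop.1 (hE.2.2.2.eventually_gt_atTop 1)
  have hF := hE.comp_add N
  have hnt : ∀ n, (E (n + N)).Nontrivial := fun n =>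
    (one_lt_ncard_iff_nontrivial_and_finite.1 (hN _ (Nat.le_add_left N n))).1
  obtain ⟨g, hg, hg_union⟩ := exists_section_of_tmax_subset_proj hS hF.2.2.1 hF.1
    (tmax_comp_add_subset_proj hE.2.2.1 hT N)
  have hinj : InjOn (φ ∘ g) (Tmax fun n => E (n + N)) := fun x hx y hy hxy => by
    rw [← (hg x hx).2, ← (hg y hy).2, hbij.injOn (hg x hx).1 (hg y hy).1 hxy]
  obtain ⟨E', hE', hT'⟩ := exists_spread_tmax_subset_proj_image hF hnt hinj
    fun x hx y hy => by
      simp only [Function.comp_apply, hg_union]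
      exact hhom _ (hg x hx).1 _ (hg y hy).1
  exact ⟨E', hE', hT'.trans (image_mono (image_subset_iff.2 fun x hx => hbij.mapsTo (hg x hx).1))⟩

/-- Persistence of `T_max` across isomorphic concrete representations. -/
theorem stmt13 {Ω Ω' : Type*} (S : Set (Set Ω)) (S' : Set (Set Ω'))
    (hS : UnionClosed S) (hS' : UnionClosed S')
    (φ : Set Ω → Set Ω') (hbij : Set.BijOn φ S S')
    (hhom : ∀ x ∈ S, ∀ y ∈ S, φ (x ∪ y) = φ x ∪ φ y)
    (h : ∃ E : ℕ → Set Ω, IsSpread E ∧ Tmax E ⊆ proj S (sjoin E)) :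
    ∃ E' : ℕ → Set Ω', IsSpread E' ∧ Tmax E' ⊆ proj S' (sjoin E') :=
  stmt13_general S S' hS φ hbij hhom h
end

section
/- Let S be a semilattice and let E ⊆ S be a finite nonempty subset with |E| = n. Then the subsemilattice of S generated by E, namely { ∏_{x∈F} x : F a nonempty subset of E }, has cardinality at most 2^n − 1, and equality holds if and only if E is incompressible. -/
/-!
The generated subsemilattice is the image of the `2 ^ n - 1` nonempty subsets of `E` under
`F ↦ ⨆ F`, so equality holds iff this map is injective on them. Injectivity says in particular
that no proper subset has the join of `E`. Conversely, if `⨆ F = ⨆ G` with `x ∈ G \ F`, then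
`x ≤ ⨆ F ≤ ⨆ (E \ {x})`, so `E \ {x}` already has the join of `E`.
-/

open Set Filter
open scoped Classical

variable {Ω : Type*}

namespace Finset

theorem card_powerset_filter_nonempty {α : Type*} (E : Finset α) :
    #(E.powerset.filter Finset.Nonempty) = 2 ^ #E - 1 := by
  have hIoc : E.powerset.filter Finset.Nonempty = Ioc ∅ E := by
    ext F
    simp [empty_ssubset, and_comm]
  simpa [hIoc] using card_Ioc_finset (empty_subset E)

variable {S : Type*} [SemilatticeSup S]

def supNonempty (F : {F : Finset S // F.Nonempty}) : S := F.1.sup' F.2 id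

theorem sup'_erase_eq_of_le {E : Finset S} {x : S} (hx : x ∈ E)
    (hEx : (E.erase x).Nonempty) (hle : x ≤ (E.erase x).sup' hEx id) :
    (E.erase x).sup' hEx id = E.sup' (hEx.mono (erase_subset x E)) id :=
  calc (E.erase x).sup' hEx id = x ⊔ (E.erase x).sup' hEx id := (sup_of_le_right hle).symm
    _ = (insert x (E.erase x)).sup' (insert_nonempty _ _) id := (sup'_insert hEx (f := id)).symm
    _ = E.sup' _ id := sup'_congr _ (insert_erase hx) fun _ _ => rfl

theorem subset_of_sup'_eq {E F G : Finset S} (hinc : AIncomp E) (hFE : F ⊆ E) (hGE : G ⊆ E)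
    (hF : F.Nonempty) (hG : G.Nonempty) (hGF : G.sup' hG id = F.sup' hF id) : G ⊆ F := by
  intro x hxG
  by_contra hxF
  have hxE : x ∈ E := hGE hxG
  have hFx : F ⊆ E.erase x := fun y hy => mem_erase.mpr ⟨fun h => hxF (h ▸ hy), hFE hy⟩
  have hEx : (E.erase x).Nonempty := hF.mono hFx
  have hx_le : x ≤ (E.erase x).sup' hEx id :=
    calc x ≤ G.sup' hG id := le_sup' id hxG
      _ = F.sup' hF id := hGF
      _ ≤ (E.erase x).sup' hEx id := sup'_mono id hFx hF
  exact hinc _ (erase_ssubset hxE) hEx _ (sup'_erase_eq_of_le hxE hEx hx_le)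

theorem injOn_supNonempty_iff (E : Finset S) :
    Set.InjOn supNonempty
        (↑(E.powerset.subtype Finset.Nonempty) : Set {F : Finset S // F.Nonempty}) ↔
      AIncomp E := by
  constructor
  · intro hinj E' hE'E hE' hE hsup
    exact hE'E.ne (congrArg Subtype.val
      (hinj (x₁ := ⟨E', hE'⟩) (x₂ := ⟨E, hE⟩) (by simpa using hE'E.subset) (by simp) hsup))
  · intro hinc F hF G hG hsup
    simp only [mem_coe, mem_subtype, mem_powerset] at hF hG
    exact Subtype.ext (subset_antisymm (subset_of_sup'_eq hinc hG hF G.2 F.2 hsup)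
      (subset_of_sup'_eq hinc hF hG F.2 G.2 hsup.symm))

theorem setOf_exists_sup'_eq_image (E : Finset S) :
    {s : S | ∃ F : Finset S, F ⊆ E ∧ ∃ hF : F.Nonempty, F.sup' hF id = s} =
      ↑((E.powerset.subtype Finset.Nonempty).image supNonempty) := by
  ext s
  simp [supNonempty]

end Finset

theorem stmt15_general {S : Type*} [SemilatticeSup S] (n : ℕ) (E : Finset S)
    (hcard : E.card = n) :
    ({s : S | ∃ F : Finset S, F ⊆ E ∧ ∃ hF : F.Nonempty, F.sup' hF id = s}.ncard
        ≤ 2 ^ n - 1) ∧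
    ({s : S | ∃ F : Finset S, F ⊆ E ∧ ∃ hF : F.Nonempty, F.sup' hF id = s}.ncard
        = 2 ^ n - 1 ↔ AIncomp E) := by
  have hcard_dom : (E.powerset.subtype Finset.Nonempty).card = 2 ^ n - 1 := by
    rw [Finset.card_subtype, Finset.card_powerset_filter_nonempty, hcard]
  rw [Finset.setOf_exists_sup'_eq_image, Set.ncard_coe_finset, ← hcard_dom,
    Finset.card_image_iff, Finset.injOn_supNonempty_iff]
  exact ⟨Finset.card_image_le, Iff.rfl⟩

/-- The subsemilattice generated by an `n`-element set has at most `2^n − 1` elements,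
with equality iff the set is incompressible. -/
theorem stmt15 {S : Type*} [SemilatticeSup S] (n : ℕ) (E : Finset S)
    (hE : E.Nonempty) (hcard : E.card = n) :
    ({s : S | ∃ F : Finset S, F ⊆ E ∧ ∃ hF : F.Nonempty, F.sup' hF id = s}.ncard
        ≤ 2 ^ n - 1) ∧
    ({s : S | ∃ F : Finset S, F ⊆ E ∧ ∃ hF : F.Nonempty, F.sup' hF id = s}.ncard
        = 2 ^ n - 1 ↔ AIncomp E) :=
  stmt15_general n E hcard
end
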